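/- arXiv:0812.3807 — 11 statements merged into one kernel-verified Lean document; each statement's English description precedes it below -/
import Mathlib

section
/- Let R be a commutative ring and L an acyclic complex of finitely generated projective R-modules. If the complex Hom_R(L, R) is acyclic, then the complex E ⊗_R L is acyclic for every injective R-module E. -/
universe u

open TensorProduct

/-- A `ℤ`-indexed chain complex of `R`-modules: modules `X i` with
differentials `d i : X (i+1) →ₗ[R] X i` satisfying `d ∘ d = 0`. -/
structure ModComplex (R : Type u) [CommRing R] : Type (u + 1) where
  X : ℤ → Type u
  [addCommGroup : ∀ i, AddCommGroup (X i)]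
  [module : ∀ i, Module R (X i)]
  d : ∀ i : ℤ, X (i + 1) →ₗ[R] X i
  dd : ∀ i : ℤ, (d i).comp (d (i + 1)) = 0

attribute [instance] ModComplex.addCommGroup ModComplex.module

namespace ModComplex

variable {R : Type u} [CommRing R] (L : ModComplex R)

/-- The complex is acyclic: exact at every spot. -/
def Acyclic : Prop := ∀ i : ℤ, Function.Exact (L.d (i + 1)) (L.d i)

/-- The complex `Hom_R(L, N)` is acyclic. -/
def HomAcyclic (N : Type u) [AddCommGroup N] [Module R N] : Prop :=
  ∀ i : ℤ, Function.Exact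
    (fun φ : L.X i →ₗ[R] N => φ.comp (L.d i))
    (fun φ : L.X (i + 1) →ₗ[R] N => φ.comp (L.d (i + 1)))

/-- The complex `Hom_R(E, L)` is acyclic. -/
def CoHomAcyclic (E : Type u) [AddCommGroup E] [Module R E] : Prop :=
  ∀ i : ℤ, Function.Exact
    (fun φ : E →ₗ[R] L.X (i + 1 + 1) => (L.d (i + 1)).comp φ)
    (fun φ : E →ₗ[R] L.X (i + 1) => (L.d i).comp φ)

/-- The complex `E ⊗_R L` is acyclic. -/
def TensorAcyclic (E : Type u) [AddCommGroup E] [Module R E] : Prop :=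
  ∀ i : ℤ, Function.Exact
    (LinearMap.lTensor E (L.d (i + 1)))
    (LinearMap.lTensor E (L.d i))

/-- The complex consists of finitely generated projective modules. -/
def FGProj : Prop :=
  ∀ i : ℤ, Module.Finite R (L.X i) ∧ Module.Projective R (L.X i)

/-- A totally acyclic complex: an acyclic complex of finitely generated
projective modules such that `Hom_R(L, R)` is acyclic. -/
def TotallyAcyclic : Prop := L.Acyclic ∧ L.FGProj ∧ L.HomAcyclic R

end ModComplex

/-- `M` is (isomorphic to) the cokernel of the differential `d 0 : X 1 → X 0`. -/
def IsCokerOf {R : Type u} [CommRing R] (L : ModComplex R)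
    (M : Type u) [AddCommGroup M] [Module R M] : Prop :=
  ∃ f : L.X 0 →ₗ[R] M, Function.Surjective f ∧ LinearMap.ker f = LinearMap.range (L.d 0)

/-- `M` is (isomorphic to) the kernel of the differential `d 0 : X 1 → X 0`. -/
def IsKerOf {R : Type u} [CommRing R] (L : ModComplex R)
    (M : Type u) [AddCommGroup M] [Module R M] : Prop :=
  ∃ f : M →ₗ[R] L.X 1, Function.Injective f ∧ LinearMap.range f = LinearMap.ker (L.d 0)

/-- `M` is totally reflexive: it is a cokernel of a differential in a totally
acyclic complex of finitely generated projective modules. -/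
def IsTotallyReflexive (R : Type u) [CommRing R]
    (M : Type u) [AddCommGroup M] [Module R M] : Prop :=
  ∃ L : ModComplex R, L.TotallyAcyclic ∧ IsCokerOf L M

/-- Gorenstein projective module. -/
def IsGorensteinProjective (R : Type u) [CommRing R]
    (A : Type u) [AddCommGroup A] [Module R A] : Prop :=
  ∃ L : ModComplex R, L.Acyclic ∧ (∀ i, Module.Projective R (L.X i)) ∧
    (∀ (Q : Type u) [AddCommGroup Q] [Module R Q],
      Module.Projective R Q → L.HomAcyclic Q) ∧
    IsCokerOf L A

/-- Gorenstein injective module. -/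
def IsGorensteinInjective (R : Type u) [CommRing R]
    (B : Type u) [AddCommGroup B] [Module R B] : Prop :=
  ∃ L : ModComplex R, L.Acyclic ∧ (∀ i, Module.Injective R (L.X i)) ∧
    (∀ (E : Type u) [AddCommGroup E] [Module R E],
      Module.Injective R E → L.CoHomAcyclic E) ∧
    IsKerOf L B

/-- Gorenstein flat module. -/
def IsGorensteinFlat (R : Type u) [CommRing R]
    (M : Type u) [AddCommGroup M] [Module R M] : Prop :=
  ∃ L : ModComplex R, L.Acyclic ∧ (∀ i, Module.Flat R (L.X i)) ∧
    (∀ (E : Type u) [AddCommGroup E] [Module R E],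
      Module.Injective R E → L.TensorAcyclic E) ∧
    IsCokerOf L M

/-- `M` has projective dimension at most `n`. -/
def ProjDimLe (R : Type u) [CommRing R] :
    ℕ → ∀ (M : Type u) [AddCommGroup M] [Module R M], Prop
  | 0, M, _, _ => Module.Projective R M
  | n + 1, M, _, _ =>
    ∃ (P : Type u) (_ : AddCommGroup P) (_ : Module R P) (f : P →ₗ[R] M),
      Module.Projective R P ∧ Function.Surjective f ∧
        ProjDimLe R n (LinearMap.ker f)

/-- `M` has flat dimension at most `n`. -/
def FlatDimLe (R : Type u) [CommRing R] :
    ℕ → ∀ (M : Type u) [AddCommGroup M] [Module R M], Prop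
  | 0, M, _, _ => Module.Flat R M
  | n + 1, M, _, _ =>
    ∃ (F : Type u) (_ : AddCommGroup F) (_ : Module R F) (f : F →ₗ[R] M),
      Module.Flat R F ∧ Function.Surjective f ∧
        FlatDimLe R n (LinearMap.ker f)

/-- `M` has Gorenstein projective dimension at most `n`. -/
def GProjDimLe (R : Type u) [CommRing R] :
    ℕ → ∀ (M : Type u) [AddCommGroup M] [Module R M], Prop
  | 0, M, _, _ => IsGorensteinProjective R M
  | n + 1, M, _, _ =>
    ∃ (P : Type u) (_ : AddCommGroup P) (_ : Module R P) (f : P →ₗ[R] M),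
      IsGorensteinProjective R P ∧ Function.Surjective f ∧
        GProjDimLe R n (LinearMap.ker f)

/-- The projective dimension, as an element of `ℕ∞`. -/
noncomputable def projDim (R : Type u) [CommRing R]
    (M : Type u) [AddCommGroup M] [Module R M] : ℕ∞ :=
  sInf {n : ℕ∞ | ∃ m : ℕ, n = m ∧ ProjDimLe R m M}

/-- The Gorenstein projective dimension, as an element of `ℕ∞`. -/
noncomputable def gProjDim (R : Type u) [CommRing R]
    (M : Type u) [AddCommGroup M] [Module R M] : ℕ∞ :=
  sInf {n : ℕ∞ | ∃ m : ℕ, n = m ∧ GProjDimLe R m M}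


section AuxTotAcyc

open Function LinearMap Module TensorProduct

universe v

variable {R : Type v} [CommRing R]

/-- The natural map `E ⊗ P → Hom(Hom(P,R), E)`, `e ⊗ p ↦ (φ ↦ φ p • e)`. -/
noncomputable def iotaMap (E P : Type v) [AddCommGroup E] [Module R E]
    [AddCommGroup P] [Module R P] :
    E ⊗[R] P →ₗ[R] (Module.Dual R P →ₗ[R] E) :=
  TensorProduct.lift ((LinearMap.smulRightₗ.comp (Module.Dual.eval R P)).flip)

@[simp] lemma iotaMap_tmul (E P : Type v) [AddCommGroup E] [Module R E]
    [AddCommGroup P] [Module R P] (e : E) (p : P) (φ : Module.Dual R P) :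
    iotaMap E P (e ⊗ₜ p) φ = φ p • e := rfl

lemma iotaMap_natural {E P Q : Type v} [AddCommGroup E] [Module R E]
    [AddCommGroup P] [Module R P] [AddCommGroup Q] [Module R Q]
    (f : P →ₗ[R] Q) (x : E ⊗[R] P) :
    iotaMap E Q (f.lTensor E x) = (iotaMap E P x).comp f.dualMap := by
  induction x using TensorProduct.induction_on with
  | zero => simp
  | tmul e p => ext φ; simp
  | add x y hx hy =>
      rw [map_add, map_add, hx, hy]
      ext φ; simp [LinearMap.add_apply]

lemma iotaMap_bijective_of_free (E : Type v) [AddCommGroup E] [Module R E]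
    (n : ℕ) : Function.Bijective (iotaMap (R := R) E (Fin n → R)) := by
  let P := Fin n → R
  let e : E ⊗[R] P ≃ₗ[R] (Module.Dual R P →ₗ[R] E) :=
    (TensorProduct.comm R E P) ≪≫ₗ
      (LinearEquiv.rTensor E (Module.evalEquiv R P)) ≪≫ₗ
      (dualTensorHomEquiv R (Module.Dual R P) E)
  have he : (iotaMap E P : E ⊗[R] P → _) = e := by
    funext x
    induction x using TensorProduct.induction_on with
    | zero => simp
    | tmul a p =>
        ext φ
        simp [e, P, LinearEquiv.rTensor, dualTensorHomEquiv]
    | add x y hx hy => rw [map_add, hx, hy, map_add]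
  rw [he]
  exact e.bijective

lemma iotaMap_bijective (E P : Type v) [AddCommGroup E] [Module R E]
    [AddCommGroup P] [Module R P] [Module.Finite R P] [Module.Projective R P] :
    Function.Bijective (iotaMap (R := R) E P) := by
  obtain ⟨n, f, g, hf, hg, hfg⟩ := Module.Finite.exists_comp_eq_id_of_projective R P
  have hfree := iotaMap_bijective_of_free (R := R) E n
  have hTgf : ∀ x : E ⊗[R] P, f.lTensor E (g.lTensor E x) = x := by
    intro x
    rw [← LinearMap.comp_apply, ← LinearMap.lTensor_comp, hfg, LinearMap.lTensor_id,
      LinearMap.id_apply]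
  constructor
  · intro x y hxy
    have h1 : iotaMap E (Fin n → R) (g.lTensor E x) = iotaMap E (Fin n → R) (g.lTensor E y) := by
      rw [iotaMap_natural, iotaMap_natural, hxy]
    have := hfree.injective h1
    rw [← hTgf x, ← hTgf y, this]
  · intro ψ
    -- ψ : Dual P →ₗ E
    obtain ⟨z, hz⟩ := hfree.surjective (ψ.comp g.dualMap)
    refine ⟨f.lTensor E z, ?_⟩
    rw [iotaMap_natural, hz, LinearMap.comp_assoc]
    have : g.dualMap.comp f.dualMap = LinearMap.id := by
      ext φ x
      have hx : f (g x) = x := by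
        have := LinearMap.ext_iff.mp hfg x
        simpa using this
      simp [hx]
    rw [this, LinearMap.comp_id]

/-- Contravariant Hom into an injective module preserves exactness. -/
lemma hom_exact_of_injective {A B C E : Type v}
    [AddCommGroup A] [Module R A] [AddCommGroup B] [Module R B]
    [AddCommGroup C] [Module R C] [AddCommGroup E] [Module R E]
    (hE : Module.Injective R E) (f : A →ₗ[R] B) (g : B →ₗ[R] C)
    (hex : Function.Exact f g) :
    Function.Exact (fun ψ : C →ₗ[R] E => ψ.comp g) (fun ψ : B →ₗ[R] E => ψ.comp f) := by
  intro ψ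
  constructor
  · intro hψ
    -- ψ.comp f = 0, so ψ vanishes on ker g; factor through range g and extend
    have hker : LinearMap.ker g ≤ LinearMap.ker ψ := by
      intro b hb
      rw [hex.linearMap_ker_eq] at hb
      obtain ⟨a, rfl⟩ := hb
      have := congrArg (fun h : A →ₗ[R] E => h a) hψ
      simpa using this
    -- factor ψ through B ⧸ ker g ≃ range g
    let q := g.quotKerEquivRange
    let ψ' : LinearMap.range g →ₗ[R] E :=
      (Submodule.liftQ (LinearMap.ker g) ψ hker).comp q.symm.toLinearMap
    obtain ⟨χ, hχ⟩ := hE.out (LinearMap.range g).subtype Subtype.val_injective ψ'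
    refine ⟨χ, ?_⟩
    ext b
    have h1 : χ (g b) = ψ' ⟨g b, LinearMap.mem_range_self g b⟩ :=
      hχ ⟨g b, LinearMap.mem_range_self g b⟩
    have h2 : ψ' ⟨g b, LinearMap.mem_range_self g b⟩ = ψ b := by
      have hq : q (Submodule.Quotient.mk b) = ⟨g b, LinearMap.mem_range_self g b⟩ := by
        apply Subtype.ext
        simp [q, LinearMap.quotKerEquivRange]
      have : q.symm ⟨g b, LinearMap.mem_range_self g b⟩ = Submodule.Quotient.mk b := by
        rw [← hq, LinearEquiv.symm_apply_apply]
      simp [ψ', this]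
    simp only [LinearMap.comp_apply]
    rw [h1, h2]
  · rintro ⟨χ, rfl⟩
    ext a
    simp [hex.apply_apply_eq_zero a]

/-- Transfer exactness along a ladder of bijections. -/
lemma exact_of_ladder {A B C A' B' C' : Type*} [Zero C] [Zero C']
    (e₁ : A → A') (e₂ : B → B') (e₃ : C → C')
    (f : A → B) (g : B → C) (u : A' → B') (v : B' → C')
    (he₁ : Function.Surjective e₁) (he₂ : Function.Injective e₂)
    (he₃ : Function.Injective e₃) (hz : e₃ 0 = 0)
    (h₁ : ∀ a, e₂ (f a) = u (e₁ a)) (h₂ : ∀ b, e₃ (g b) = v (e₂ b))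
    (hex : Function.Exact u v) : Function.Exact f g := by
  intro b
  constructor
  · intro hb
    have : v (e₂ b) = 0 := by rw [← h₂, hb, hz]
    obtain ⟨a', ha'⟩ := (hex (e₂ b)).mp this
    obtain ⟨a, rfl⟩ := he₁ a'
    exact ⟨a, he₂ (by rw [h₁, ha'])⟩
  · rintro ⟨a, rfl⟩
    apply he₃
    rw [h₂, h₁, hz, hex.apply_apply_eq_zero]

end AuxTotAcyc

/-- If `L` is an acyclic complex of finitely generated projective modules and
`Hom_R(L, R)` is acyclic, then `E ⊗_R L` is acyclic for every injective `E`. -/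
theorem hom_acyclic_implies_tensor_acyclic {R : Type u} [CommRing R]
    (L : ModComplex R) (hfg : L.FGProj) (hac : L.Acyclic)
    (hhom : L.HomAcyclic R)
    (E : Type u) [AddCommGroup E] [Module R E] (hE : Module.Injective R E) :
    L.TensorAcyclic E := by
  intro i
  have h2 := (hfg (i+1+1)); have h1 := (hfg (i+1)); have h0 := (hfg i)
  have i2f := h2.1; have i2p := h2.2
  have i1f := h1.1; have i1p := h1.2
  have i0f := h0.1; have i0p := h0.2
  -- the dual sequence is exact; apply Hom(-, E)
  have hdual : Function.Exact ((L.d i).dualMap) ((L.d (i+1)).dualMap) := hhom i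
  have hhomE := hom_exact_of_injective hE ((L.d i).dualMap) ((L.d (i+1)).dualMap) hdual
  exact exact_of_ladder
    (iotaMap E (L.X (i+1+1))) (iotaMap E (L.X (i+1))) (iotaMap E (L.X i))
    (LinearMap.lTensor E (L.d (i+1))) (LinearMap.lTensor E (L.d i))
    (fun ψ => ψ.comp ((L.d (i+1)).dualMap)) (fun ψ => ψ.comp ((L.d i).dualMap))
    (iotaMap_bijective E _).surjective (iotaMap_bijective E _).injective
    (iotaMap_bijective E _).injective (map_zero _)
    (fun a => iotaMap_natural (L.d (i+1)) a)
    (fun b => iotaMap_natural (L.d i) b)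
    hhomE
end

section
/- Let R be a commutative ring and L an acyclic complex of finitely generated projective R-modules. If E ⊗_R L is acyclic for every injective R-module E, then Hom_R(L, F) is acyclic for every flat R-module F. -/
universe u

open TensorProduct

/-!
For flat `F` the character module `F⋆ = Hom_ℤ(F, ℚ/ℤ)` is injective, so `F⋆ ⊗ L` is acyclic.
For finitely generated projective `X` the natural map `F⋆ ⊗ X → Hom_R(X, F)⋆`,
`χ ⊗ x ↦ (φ ↦ χ (φ x))`, is an isomorphism (it is `X ≅ X**` followed by `X** ⊗ F⋆ ≅ Hom(X*, F⋆)`,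
`Hom(X*, F⋆) ≅ (X* ⊗ F)⋆` and `X* ⊗ F ≅ Hom(X, F)`), so `F⋆ ⊗ L` is the character dual of
`Hom_R(L, F)`. Since `ℚ/ℤ` is an injective cogenerator, a complex with acyclic character dual is
acyclic.
-/

open Module

namespace CharacterModule

variable {R : Type*} [CommRing R]

theorem exact_of_exact_dual {A B C : Type*} [AddCommGroup A] [AddCommGroup B] [AddCommGroup C]
    [Module R A] [Module R B] [Module R C] {f : A →ₗ[R] B} {g : B →ₗ[R] C}
    (h : Function.Exact (dual g) (dual f)) : Function.Exact f g := by
  refine LinearMap.exact_of_comp_of_mem_range ?_ fun y hy => ?_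
  · ext a
    exact eq_zero_of_character_apply fun c => DFunLike.congr_fun (h.apply_apply_eq_zero c) a
  · -- a character of `B ⧸ range f` vanishes on `range f`, hence factors through `g`
    rw [← Submodule.Quotient.mk_eq_zero]
    refine eq_zero_of_character_apply fun c => ?_
    have hdual : dual f ∘ₗ dual (LinearMap.range f).mkQ = 0 := by
      rw [← dual_comp, LinearMap.range_mkQ_comp, dual_zero]
    obtain ⟨c', hc'⟩ := (h (dual (LinearMap.range f).mkQ c)).mp (LinearMap.congr_fun hdual c)
    calc c (Submodule.Quotient.mk y) = dual g c' y := by rw [hc']; rfl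
      _ = 0 := by rw [dual_apply]; exact (congrArg c' hy).trans c'.map_zero

variable (F X : Type*) [AddCommGroup F] [Module R F] [AddCommGroup X] [Module R X]

noncomputable def tensorToDualHom :
    CharacterModule F ⊗[R] X →ₗ[R] CharacterModule (X →ₗ[R] F) :=
  TensorProduct.lift <| LinearMap.mk₂ R (fun χ x => dual (LinearMap.applyₗ x) χ)
    (fun _ _ _ => map_add _ _ _) (fun _ _ _ => map_smul _ _ _)
    (fun χ x₁ x₂ => by
      ext φ
      show χ (φ (x₁ + x₂)) = χ (φ x₁) + χ (φ x₂)
      rw [map_add, map_add])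
    (fun r χ x => by
      ext φ
      show χ (φ (r • x)) = χ (r • φ x)
      rw [map_smul])

variable {F X} in
lemma tensorToDualHom_comp_lTensor {Y : Type*} [AddCommGroup Y] [Module R Y] (f : X →ₗ[R] Y) :
    tensorToDualHom F Y ∘ₗ f.lTensor (CharacterModule F) =
      dual (f.lcomp R F) ∘ₗ tensorToDualHom F X := by
  ext χ x φ
  rfl

lemma dual_dualTensorHom_comp_tensorToDualHom :
    dual (dualTensorHom R X F) ∘ₗ tensorToDualHom F X =
      homEquiv.toLinearMap ∘ₗ dualTensorHom R (Dual R X) (CharacterModule F) ∘ₗ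
        (TensorProduct.comm R _ _).toLinearMap ∘ₗ (Dual.eval R X).lTensor (CharacterModule F) := by
  ext χ x φ
  induction φ using TensorProduct.induction_on with
  | zero => simp only [map_zero]
  | tmul ψ v => rfl
  | add a b ha hb => simp only [map_add, ha, hb]

lemma tensorToDualHom_bijective [Module.Finite R X] [Projective R X] :
    Function.Bijective (tensorToDualHom (R := R) F X) := by
  have hdual : Function.Bijective (dual (R := R) (dualTensorHom R X F)) :=
    (dual_bijective_iff_bijective (A := Dual R X ⊗[R] F) (A' := X →ₗ[R] F)).mpr
      dualTensorHom_bijective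
  rw [← hdual.of_comp_iff', ← LinearMap.coe_comp, dual_dualTensorHom_comp_tensorToDualHom]
  simp only [LinearMap.coe_comp, LinearEquiv.coe_coe]
  exact homEquiv.bijective.comp <| dualTensorHom_bijective.comp <| (LinearEquiv.bijective _).comp <|
    (LinearEquiv.lTensor (CharacterModule F) (evalEquiv R X)).bijective

end CharacterModule

namespace ModComplex

open CharacterModule

variable {R : Type u} [CommRing R] (L : ModComplex R)

theorem homAcyclic_of_tensorAcyclic_characterModule (hfg : L.FGProj)
    (F : Type u) [AddCommGroup F] [Module R F] (h : L.TensorAcyclic (CharacterModule F)) :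
    L.HomAcyclic F := by
  let e : ∀ j, CharacterModule F ⊗[R] L.X j ≃ₗ[R] CharacterModule (L.X j →ₗ[R] F) := fun j =>
    have := (hfg j).1
    have := (hfg j).2
    .ofBijective _ (tensorToDualHom_bijective F (L.X j))
  intro i
  refine exact_of_exact_dual (f := (L.d i).lcomp R F) (g := (L.d (i + 1)).lcomp R F) ?_
  exact (h i).of_ladder_linearEquiv_of_exact (e₁ := e _) (e₂ := e _) (e₃ := e _)
    (tensorToDualHom_comp_lTensor _).symm (tensorToDualHom_comp_lTensor _).symm

end ModComplex

theorem tensor_acyclic_implies_hom_flat_acyclic_general {R : Type u} [CommRing R]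
    (L : ModComplex R) (hfg : L.FGProj)
    (htens : ∀ (E : Type u) [AddCommGroup E] [Module R E],
      Module.Injective R E → L.TensorAcyclic E)
    (F : Type u) [AddCommGroup F] [Module R F] (hF : Module.Flat R F) :
    L.HomAcyclic F :=
  L.homAcyclic_of_tensorAcyclic_characterModule hfg F <|
    htens _ (Module.Flat.iff_characterModule_injective.mp hF)

/-- If `L` is an acyclic complex of finitely generated projective modules and
`E ⊗_R L` is acyclic for every injective `E`, then `Hom_R(L, F)` is acyclic
for every flat `F`. -/
theorem tensor_acyclic_implies_hom_flat_acyclic {R : Type u} [CommRing R]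
    (L : ModComplex R) (hfg : L.FGProj) (hac : L.Acyclic)
    (htens : ∀ (E : Type u) [AddCommGroup E] [Module R E],
      Module.Injective R E → L.TensorAcyclic E)
    (F : Type u) [AddCommGroup F] [Module R F] (hF : Module.Flat R F) :
    L.HomAcyclic F :=
  tensor_acyclic_implies_hom_flat_acyclic_general L hfg htens F hF
end

section
/- Let R be a commutative ring and x, y elements of R such that Ann(x) = (y) and Ann(y) = (x). Then the complex ⋯ → R →^x R →^y R →^x R →^y ⋯ is acyclic, and remains acyclic after applying Hom_R(−, R); in particular the ideals (x) and (y) are totally reflexive R-modules. -/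
universe u

open TensorProduct

/-- The complex `⋯ → R →^x R →^y R →^x R →^y ⋯`, with multiplication by `x`
as the differential in even degrees and by `y` in odd degrees. -/
def uvComplex (R : Type u) [CommRing R] (x y : R) (hxy : x * y = 0) :
    ModComplex R where
  X _ := R
  d i := if Even i then LinearMap.lsmul R R x else LinearMap.lsmul R R y
  dd i := by
    ext
    by_cases h : Even i
    · have h1 : ¬ Even (i + 1) := by simp [Int.even_add_one, h]
      simp [h, h1, smul_eq_mul, ← mul_assoc, hxy]
    · have h1 : Even (i + 1) := by simpa [Int.even_add_one] using h
      simp [h, h1, smul_eq_mul, ← mul_assoc, mul_comm y x, hxy]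

/-!
Since `Ann(y) = (x)`, the kernel of `R →^y R` is `xR`, the image of `R →^x R`, and symmetrically;
so the periodic complex is exact. Under `Hom_R(R, R) ≅ R`, `φ ↦ φ 1`, precomposition with
multiplication by `r` becomes multiplication by `r` again, so `Hom_R(L, R)` is the same periodic
complex read backwards and is exact for the same reason. The ideal `(x) ≅ R / Ann(x) = R / (y)`
is then the cokernel of `R →^y R`.
-/

section

variable {R : Type u} [CommRing R] {u v : R}

theorem exact_lsmul_lsmul (h : ∀ r : R, r * v = 0 ↔ r ∈ Ideal.span {u}) :
    Function.Exact (LinearMap.lsmul R R u) (LinearMap.lsmul R R v) := by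
  intro a
  simp only [LinearMap.lsmul_apply, smul_eq_mul, Set.mem_range, mul_comm v, h,
    Ideal.mem_span_singleton, dvd_def, eq_comm (a := a)]

theorem exact_lsmul_iff_exact_dualMap (u v : R) :
    Function.Exact (LinearMap.lsmul R R u) (LinearMap.lsmul R R v) ↔
      Function.Exact (LinearMap.lsmul R R u).dualMap (LinearMap.lsmul R R v).dualMap := by
  let e : Module.Dual R R ≃ₗ[R] R := LinearMap.ringLmapEquivSelf R R R
  have dualMap_lsmul (r : R) :
      LinearMap.lsmul R R r ∘ₗ e.toLinearMap =
        e.toLinearMap ∘ₗ (LinearMap.lsmul R R r).dualMap := by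
    ext φ
    simp only [e, LinearMap.coe_comp, LinearEquiv.coe_coe, Function.comp_apply,
      LinearMap.ringLmapEquivSelf_apply, LinearMap.dualMap_apply, LinearMap.lsmul_apply]
    rw [← map_smul, smul_eq_mul, mul_one]
  exact Function.Exact.iff_of_ladder_linearEquiv (dualMap_lsmul u) (dualMap_lsmul v)

end

namespace uvComplex

variable {R : Type u} [CommRing R] {x y : R}

theorem d_of_even (hxy : x * y = 0) {i : ℤ} (hi : Even i) :
    (uvComplex R x y hxy).d i = LinearMap.lsmul R R x :=
  if_pos hi

theorem d_of_odd (hxy : x * y = 0) {i : ℤ} (hi : Odd i) :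
    (uvComplex R x y hxy).d i = LinearMap.lsmul R R y :=
  if_neg (Int.not_even_iff_odd.mpr hi)

theorem d_succ_eq_and_d_eq (hxy : x * y = 0) (i : ℤ) :
    ((uvComplex R x y hxy).d (i + 1) = LinearMap.lsmul R R y ∧
        (uvComplex R x y hxy).d i = LinearMap.lsmul R R x) ∨
      ((uvComplex R x y hxy).d (i + 1) = LinearMap.lsmul R R x ∧
        (uvComplex R x y hxy).d i = LinearMap.lsmul R R y) := by
  rcases Int.even_or_odd i with hi | hi
  · exact .inl ⟨d_of_odd hxy hi.add_one, d_of_even hxy hi⟩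
  · exact .inr ⟨d_of_even hxy hi.add_one, d_of_odd hxy hi⟩

theorem acyclic (hx : ∀ r : R, r * x = 0 ↔ r ∈ Ideal.span {y})
    (hy : ∀ r : R, r * y = 0 ↔ r ∈ Ideal.span {x}) (hxy : x * y = 0) :
    (uvComplex R x y hxy).Acyclic := by
  intro i
  rcases d_succ_eq_and_d_eq hxy i with ⟨h₁, h₀⟩ | ⟨h₁, h₀⟩ <;> rw [h₁, h₀]
  · exact exact_lsmul_lsmul (R := R) hx
  · exact exact_lsmul_lsmul (R := R) hy

theorem homAcyclic (hx : ∀ r : R, r * x = 0 ↔ r ∈ Ideal.span {y})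
    (hy : ∀ r : R, r * y = 0 ↔ r ∈ Ideal.span {x}) (hxy : x * y = 0) :
    (uvComplex R x y hxy).HomAcyclic R := by
  intro i
  rcases d_succ_eq_and_d_eq hxy i with ⟨h₁, h₀⟩ | ⟨h₁, h₀⟩ <;> rw [h₁, h₀]
  · exact (exact_lsmul_iff_exact_dualMap x y).mp (exact_lsmul_lsmul hy)
  · exact (exact_lsmul_iff_exact_dualMap y x).mp (exact_lsmul_lsmul hx)

theorem totallyAcyclic (hx : ∀ r : R, r * x = 0 ↔ r ∈ Ideal.span {y})
    (hy : ∀ r : R, r * y = 0 ↔ r ∈ Ideal.span {x}) (hxy : x * y = 0) :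
    (uvComplex R x y hxy).TotallyAcyclic :=
  ⟨acyclic hx hy hxy, fun _ => ⟨Module.Finite.self R, inferInstanceAs (Module.Projective R R)⟩,
    homAcyclic hx hy hxy⟩

theorem isCokerOf_span_singleton (hx : ∀ r : R, r * x = 0 ↔ r ∈ Ideal.span {y})
    (hyx : y * x = 0) : IsCokerOf (uvComplex R y x hyx) (Ideal.span {x} : Ideal R) := by
  refine ⟨(LinearMap.lsmul R R x).codRestrict (Ideal.span {x})
    fun r => Ideal.mul_mem_right r _ (Ideal.mem_span_singleton_self x), ?_, ?_⟩
  · rintro ⟨a, ha⟩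
    obtain ⟨c, rfl⟩ := Ideal.mem_span_singleton.mp ha
    exact ⟨c, rfl⟩
  · exact (LinearMap.ker_codRestrict _ _ _).trans <|
      (exact_lsmul_lsmul hx).linearMap_ker_eq.trans <|
        congrArg LinearMap.range (d_of_even hyx Even.zero).symm

end uvComplex

theorem isTotallyReflexive_span_singleton {R : Type u} [CommRing R] {x y : R}
    (hx : ∀ r : R, r * x = 0 ↔ r ∈ Ideal.span {y})
    (hy : ∀ r : R, r * y = 0 ↔ r ∈ Ideal.span {x}) :
    IsTotallyReflexive R (Ideal.span {x} : Ideal R) :=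
  have hyx : y * x = 0 := (hx y).mpr (Ideal.mem_span_singleton_self y)
  ⟨_, uvComplex.totallyAcyclic hy hx hyx, uvComplex.isCokerOf_span_singleton hx hyx⟩

/-- If `Ann(x) = (y)` and `Ann(y) = (x)`, then the complex
`⋯ → R →^x R →^y R → ⋯` is totally acyclic; in particular `(x)` and `(y)`
are totally reflexive `R`-modules. -/
theorem uvComplex_totallyAcyclic_and_totallyReflexive
    {R : Type u} [CommRing R] (x y : R)
    (hx : ∀ r : R, r * x = 0 ↔ r ∈ Ideal.span {y})
    (hy : ∀ r : R, r * y = 0 ↔ r ∈ Ideal.span {x}) :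
    (uvComplex R x y ((hy x).mpr (Ideal.subset_span rfl))).TotallyAcyclic ∧
    IsTotallyReflexive R (Ideal.span {x} : Ideal R) ∧
    IsTotallyReflexive R (Ideal.span {y} : Ideal R) :=
  ⟨uvComplex.totallyAcyclic hx hy _, isTotallyReflexive_span_singleton hx hy,
    isTotallyReflexive_span_singleton hy hx⟩
end

section
/- Let D be an integral domain and X, Y nonzero nonunits of D. In the quotient ring R = D/(XY), the residue classes x and y satisfy Ann_R(x) = (y) and Ann_R(y) = (x); hence (x) and (y) are totally reflexive R-modules. -/
universe u

open TensorProduct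

section Aux

variable {R : Type u} [CommRing R]

lemma key_totallyReflexive (a b : R) (hab : a * b = 0)
    (h1 : ∀ r : R, r * a = 0 ↔ r ∈ Ideal.span {b})
    (h2 : ∀ r : R, r * b = 0 ↔ r ∈ Ideal.span {a}) :
    IsTotallyReflexive R (Ideal.span {a} : Ideal R) := by
  have hba : b * a = 0 := by rwa [mul_comm]
  set e : ℤ → R := fun i => if Even i then b else a with he
  have hee : ∀ i : ℤ, e i * e (i + 1) = 0 := by
    intro i
    rcases Int.even_or_odd i with h | h
    · have h' : ¬ Even (i + 1) := by simp [Int.even_add_one, h]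
      simp [he, h, h', hba]
    · have h0 : ¬ Even i := by simpa [Int.even_iff, Int.odd_iff] using h
      have h' : Even (i + 1) := Int.even_add_one.mpr h0
      simp [he, h0, h', hab]
  have e2 : ∀ i : ℤ, e (i + 1 + 1) = e i := by
    intro i
    have : Even (i + 1 + 1) ↔ Even i := by
      rw [Int.even_add_one, Int.even_add_one, not_not]
    simp only [he]
    by_cases h : Even i
    · rw [if_pos (this.mpr h), if_pos h]
    · rw [if_neg (fun hc => h (this.mp hc)), if_neg h]
  have ann : ∀ i : ℤ, ∀ r : R, r * e i = 0 ↔ ∃ c, r = c * e (i + 1) := by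
    intro i r
    rcases Int.even_or_odd i with h | h
    · have h' : ¬ Even (i + 1) := by simp [Int.even_add_one, h]
      simp only [he, if_pos h, if_neg h']
      rw [h2, Ideal.mem_span_singleton']
      exact ⟨fun ⟨c, hc⟩ => ⟨c, hc.symm⟩, fun ⟨c, hc⟩ => ⟨c, hc.symm⟩⟩
    · have h0 : ¬ Even i := by simpa [Int.even_iff, Int.odd_iff] using h
      have h' : Even (i + 1) := Int.even_add_one.mpr h0
      simp only [he, if_neg h0, if_pos h']
      rw [h1, Ideal.mem_span_singleton']
      exact ⟨fun ⟨c, hc⟩ => ⟨c, hc.symm⟩, fun ⟨c, hc⟩ => ⟨c, hc.symm⟩⟩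
  have hdd : ∀ i : ℤ, (LinearMap.lsmul R R (e i)).comp (LinearMap.lsmul R R (e (i + 1))) = 0 := by
    intro i
    ext
    simp [smul_eq_mul, ← mul_assoc, hee i]
  refine ⟨{ X := fun _ => R
            d := fun i => LinearMap.lsmul R R (e i)
            dd := hdd }, ⟨?_, ?_, ?_⟩, ?_⟩
  · -- Acyclic
    intro i z
    simp only [LinearMap.lsmul_apply, smul_eq_mul]
    rw [mul_comm, ann i z]
    constructor
    · rintro ⟨c, rfl⟩
      exact ⟨c, by simp [smul_eq_mul, mul_comm]⟩
    · rintro ⟨c, rfl⟩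
      exact ⟨c, by simp [smul_eq_mul, mul_comm]⟩
  · -- FGProj
    intro i
    exact ⟨inferInstance, inferInstance⟩
  · -- HomAcyclic
    intro i ψ
    constructor
    · intro h
      have h1' : ψ 1 * e (i + 1) = 0 := by
        have := congrArg (fun g => g 1) h
        simp only [LinearMap.comp_apply, LinearMap.lsmul_apply, smul_eq_mul, mul_one,
          LinearMap.zero_apply] at this
        rw [mul_comm, ← smul_eq_mul, ← map_smul, smul_eq_mul, mul_one, this]
      obtain ⟨c, hc⟩ := (ann (i + 1) (ψ 1)).mp h1'
      rw [e2 i] at hc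
      refine ⟨LinearMap.lsmul R R c, ?_⟩
      apply LinearMap.ext_ring
      simp only [LinearMap.comp_apply, LinearMap.lsmul_apply, smul_eq_mul, mul_one]
      rw [hc, mul_comm]
    · rintro ⟨φ, rfl⟩
      show (φ ∘ₗ LinearMap.lsmul R R (e i)) ∘ₗ LinearMap.lsmul R R (e (i + 1)) = 0
      rw [LinearMap.comp_assoc, hdd i, LinearMap.comp_zero]
  · -- IsCokerOf
    refine ⟨LinearMap.toSpanSingleton R _ ⟨a, Ideal.mem_span_singleton_self a⟩, ?_, ?_⟩
    · intro z
      obtain ⟨c, hc⟩ := Ideal.mem_span_singleton'.mp z.2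
      exact ⟨c, Subtype.ext (by simpa [LinearMap.toSpanSingleton_apply, smul_eq_mul] using hc)⟩
    · ext r
      have h0 : Even (0 : ℤ) := Even.zero
      simp only [LinearMap.mem_ker, LinearMap.mem_range, LinearMap.toSpanSingleton_apply,
        LinearMap.lsmul_apply, smul_eq_mul]
      rw [show ((r • (⟨a, Ideal.mem_span_singleton_self a⟩ : Ideal.span {a})) = 0 ↔ r * a = 0) from
        by rw [← Subtype.coe_inj]; simp [smul_eq_mul]]
      rw [h1 r, Ideal.mem_span_singleton']
      simp only [he, if_pos h0]
      exact ⟨fun ⟨c, hc⟩ => ⟨c, by rw [mul_comm]; exact hc⟩,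
        fun ⟨c, hc⟩ => ⟨c, by rw [mul_comm]; exact hc⟩⟩

end Aux

/-- In `R = D/(XY)` for nonzero nonunits `X, Y` of a domain `D`, the residue
classes `x, y` satisfy `Ann(x) = (y)` and `Ann(y) = (x)`, and the ideals
`(x)` and `(y)` are totally reflexive `R`-modules. -/
theorem quotient_domain_totallyReflexive
    {D : Type u} [CommRing D] [IsDomain D] (X Y : D)
    (hX0 : X ≠ 0) (hY0 : Y ≠ 0) (hXu : ¬ IsUnit X) (hYu : ¬ IsUnit Y) :
    let R := D ⧸ Ideal.span {X * Y}
    let x : R := Ideal.Quotient.mk _ X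
    let y : R := Ideal.Quotient.mk _ Y
    (∀ r : R, r * x = 0 ↔ r ∈ Ideal.span {y}) ∧
    (∀ r : R, r * y = 0 ↔ r ∈ Ideal.span {x}) ∧
    IsTotallyReflexive R (Ideal.span {x} : Ideal R) ∧
    IsTotallyReflexive R (Ideal.span {y} : Ideal R) := by
  intro R x y
  have hxy : x * y = 0 := by
    rw [show x * y = Ideal.Quotient.mk _ (X * Y) from (map_mul _ _ _).symm,
      Ideal.Quotient.eq_zero_iff_mem]
    exact Ideal.mem_span_singleton_self _
  have hyx : y * x = 0 := by rw [mul_comm]; exact hxy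
  have ann : ∀ (A B : D), A ≠ 0 → X * Y = A * B →
      ∀ r : R, r * Ideal.Quotient.mk (Ideal.span {X * Y}) A = 0 ↔
        r ∈ Ideal.span {Ideal.Quotient.mk (Ideal.span {X * Y}) B} := by
    intro A B hA0 hAB r
    constructor
    · intro h
      obtain ⟨s, rfl⟩ := Ideal.Quotient.mk_surjective r
      have hm : s * A ∈ Ideal.span {X * Y} := by
        rwa [← map_mul, Ideal.Quotient.eq_zero_iff_mem] at h
      obtain ⟨c, hc⟩ := Ideal.mem_span_singleton.mp hm
      have hs : s = B * c := by
        apply mul_left_cancel₀ hA0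
        calc A * s = s * A := mul_comm _ _
          _ = X * Y * c := hc
          _ = A * (B * c) := by rw [hAB]; ring
      rw [Ideal.mem_span_singleton]
      exact ⟨Ideal.Quotient.mk _ c, by rw [hs, map_mul]⟩
    · intro h
      obtain ⟨c, hc⟩ := Ideal.mem_span_singleton.mp h
      have hBA : (Ideal.Quotient.mk (Ideal.span {X * Y}) B) *
          (Ideal.Quotient.mk (Ideal.span {X * Y}) A) = 0 := by
        rw [← map_mul, Ideal.Quotient.eq_zero_iff_mem,
          show B * A = X * Y from by rw [hAB]; ring]
        exact Ideal.mem_span_singleton_self _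
      calc r * Ideal.Quotient.mk (Ideal.span {X * Y}) A
          = c * (Ideal.Quotient.mk (Ideal.span {X * Y}) B *
            Ideal.Quotient.mk (Ideal.span {X * Y}) A) := by rw [hc]; ring
        _ = 0 := by rw [hBA, mul_zero]
  have hAnnX : ∀ r : R, r * x = 0 ↔ r ∈ Ideal.span {y} := ann X Y hX0 rfl
  have hAnnY : ∀ r : R, r * y = 0 ↔ r ∈ Ideal.span {x} := ann Y X hY0 (mul_comm X Y)
  exact ⟨hAnnX, hAnnY, key_totallyReflexive x y hxy hAnnX hAnnY,
    key_totallyReflexive y x hyx hAnnY hAnnX⟩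
end

section
/- Let S be a commutative ring, m > 1 an integer, and R = S[X]/(X^m). For every integer n with 1 ≤ n ≤ m−1, the ideal (x^n), where x is the image of X in R, is a totally reflexive R-module. -/
universe u

open TensorProduct

section Aux

lemma truncKey {S : Type u} [CommRing S] (m a b : ℕ) (hab : a + b = m)
    (r : Polynomial S ⧸ Ideal.span {(Polynomial.X : Polynomial S) ^ m}) :
    (Ideal.Quotient.mk _ Polynomial.X :
        Polynomial S ⧸ Ideal.span {(Polynomial.X : Polynomial S) ^ m}) ^ a * r = 0 ↔
      ∃ s, r = (Ideal.Quotient.mk _ Polynomial.X) ^ b * s := by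
  obtain ⟨f, rfl⟩ := Ideal.Quotient.mk_surjective r
  constructor
  · intro h
    have h' : (Polynomial.X : Polynomial S) ^ a * f ∈
        Ideal.span {(Polynomial.X : Polynomial S) ^ m} := by
      rw [← Ideal.Quotient.eq_zero_iff_mem, map_mul, map_pow]
      exact h
    obtain ⟨g, hg⟩ := Ideal.mem_span_singleton.mp h'
    have heq : (Polynomial.X : Polynomial S) ^ a * f =
        (Polynomial.X : Polynomial S) ^ a * ((Polynomial.X : Polynomial S) ^ b * g) := by
      rw [hg, ← mul_assoc, ← pow_add, hab]
    have hf := (Polynomial.isRegular_X_pow (R := S) a).left heq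
    exact ⟨Ideal.Quotient.mk _ g, by rw [hf, map_mul, map_pow]⟩
  · rintro ⟨s, hs⟩
    rw [hs, ← mul_assoc, ← pow_add, hab]
    have : ((Ideal.Quotient.mk _ Polynomial.X :
        Polynomial S ⧸ Ideal.span {(Polynomial.X : Polynomial S) ^ m})) ^ m = 0 := by
      rw [← map_pow, Ideal.Quotient.eq_zero_iff_mem]
      exact Ideal.subset_span rfl
    rw [this, zero_mul]

lemma genTR {R : Type u} [CommRing R] (xa xb : R)
    (hab : ∀ r : R, xa * r = 0 ↔ ∃ s, r = xb * s)
    (hba : ∀ r : R, xb * r = 0 ↔ ∃ s, r = xa * s) :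
    IsTotallyReflexive R (Ideal.span {xa} : Ideal R) := by
  set c : ℤ → R := fun i => if Even i then xb else xa with hc
  have hc0 : xa * xb = 0 := (hab xb).mpr ⟨1, (mul_one xb).symm⟩
  have hc0' : xb * xa = 0 := (hba xa).mpr ⟨1, (mul_one xa).symm⟩
  have hpair : ∀ i : ℤ, (c i = xb ∧ c (i + 1) = xa) ∨ (c i = xa ∧ c (i + 1) = xb) := by
    intro i
    by_cases h : Even i
    · left
      constructor
      · simp [hc, h]
      · simp [hc, Int.even_add_one, h]
    · right
      constructor
      · simp [hc, h]
      · simp [hc, Int.even_add_one, h]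
  have hcc : ∀ i : ℤ, c i * c (i + 1) = 0 := by
    intro i
    rcases hpair i with ⟨h1, h2⟩ | ⟨h1, h2⟩
    · rw [h1, h2, hc0']
    · rw [h1, h2, hc0]
  have hexact : ∀ i : ℤ, ∀ r : R, c i * r = 0 ↔ ∃ s, r = c (i + 1) * s := by
    intro i r
    rcases hpair i with ⟨h1, h2⟩ | ⟨h1, h2⟩
    · rw [h1, h2]; exact hba r
    · rw [h1, h2]; exact hab r
  refine ⟨{ X := fun _ => R
            d := fun i => LinearMap.mulLeft R (c i)
            dd := fun i => by
              ext r
              simp only [LinearMap.comp_apply, LinearMap.mulLeft_apply, LinearMap.zero_apply,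
                ← mul_assoc, hcc i, zero_mul] }, ⟨?_, ?_, ?_⟩, ?_⟩
  · -- Acyclic
    intro i y
    simp only [LinearMap.mulLeft_apply, Set.mem_range]
    exact (hexact i y).trans (exists_congr fun s => eq_comm)
  · -- FGProj
    intro i
    exact ⟨Module.Finite.self R, inferInstance⟩
  · -- HomAcyclic
    intro i φ
    constructor
    · intro h
      have hφ : ∀ r : R, φ r = r * φ 1 := by
        intro r
        have h2 : φ (r • (1 : R)) = r • φ (1 : R) := map_smul φ r 1
        simpa using h2
      have h1 : c (i + 1) * φ 1 = 0 := by
        have h0 : φ (c (i + 1) * 1) = 0 := LinearMap.congr_fun h 1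
        have h00 : φ (c (i + 1)) = 0 :=
          ((congrArg φ (mul_one (c (i + 1)))).symm).trans h0
        exact (hφ (c (i + 1))).symm.trans h00
      obtain ⟨s, hs⟩ := (hexact (i + 1) (φ 1)).mp h1
      have hper : c (i + 1 + 1) = c i := by
        by_cases h' : Even i
        · have : Even (i + 1 + 1) := by
            rcases h' with ⟨k, hk⟩
            exact ⟨k + 1, by omega⟩
          simp [hc, h', this]
        · have : ¬ Even (i + 1 + 1) := by
            intro hcon
            exact h' (by rcases hcon with ⟨k, hk⟩; exact ⟨k - 1, by omega⟩)
          simp [hc, h', this]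
      rw [hper] at hs
      refine ⟨LinearMap.mulLeft R s, LinearMap.ext fun r => ?_⟩
      show s * (c i * r) = φ r
      have : φ r = r * (c i * s) := by rw [hφ r, hs]
      rw [this]
      ring
    · rintro ⟨ψ, rfl⟩
      refine LinearMap.ext fun r => ?_
      show ψ (c i * (c (i + 1) * r)) = 0
      have hz : c i * (c (i + 1) * r) = 0 := by rw [← mul_assoc, hcc i, zero_mul]
      exact (congrArg ψ hz).trans (map_zero ψ)
  · -- IsCokerOf
    refine ⟨LinearMap.codRestrict (Ideal.span {xa} : Ideal R) (LinearMap.mulLeft R xa)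
        (fun r => Ideal.mem_span_singleton.mpr ⟨r, rfl⟩), ?_, ?_⟩
    · rintro ⟨y, hy⟩
      obtain ⟨s, hs⟩ := Ideal.mem_span_singleton.mp hy
      exact ⟨s, Subtype.ext (by simp [LinearMap.codRestrict, hs])⟩
    · ext r
      have hc0e : c (0 : ℤ) = xb := by simp [hc]
      simp only [LinearMap.mem_ker, LinearMap.codRestrict, LinearMap.mem_range]
      constructor
      · intro h
        have hz : xa * r = 0 := congrArg Subtype.val h
        obtain ⟨s, hs⟩ := (hab r).mp hz
        exact ⟨s, by simp [LinearMap.mulLeft_apply, hc0e, hs]⟩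
      · rintro ⟨s, rfl⟩
        apply Subtype.ext
        simp only [LinearMap.mulLeft_apply, hc0e, Submodule.coe_zero]
        show xa * (xb * s) = 0
        rw [← mul_assoc, hc0, zero_mul]

end Aux

/-- In `R = S[X]/(X^m)` with `m > 1`, the ideal `(x^n)` is a totally
reflexive `R`-module for every `1 ≤ n ≤ m - 1`. -/
theorem truncated_polynomial_totallyReflexive
    {S : Type u} [CommRing S] (m : ℕ) (hm : 1 < m)
    (n : ℕ) (hn1 : 1 ≤ n) (hn2 : n ≤ m - 1) :
    let R := Polynomial S ⧸ Ideal.span {(Polynomial.X : Polynomial S) ^ m}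
    let x : R := Ideal.Quotient.mk _ Polynomial.X
    IsTotallyReflexive R (Ideal.span {x ^ n} : Ideal R) := by
  intro R x
  have h1 : n + (m - n) = m := by omega
  have h2 : (m - n) + n = m := by omega
  have hab := fun r => truncKey (S := S) m n (m - n) h1 r
  have hba := fun r => truncKey (S := S) m (m - n) n h2 r
  exact genTR (x ^ n) (x ^ (m - n)) hab hba
end

section
/- If a commutative ring R has the property that every countable direct sum of Gorenstein injective R-modules is Gorenstein injective, then every countable direct sum of injective R-modules is injective. -/
/-!
Let every `E n` be injective. An injective module `B` is Gorenstein injective, witnessed by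
the complex `⋯ → B --id→ B --0→ B --id→ B → ⋯`, so by hypothesis `⊕ E n ≅ ker (d₀ : X₁ → X₀)`
for a complex `X` of injectives that stays exact under `Hom_R(E n, -)`. Hence each inclusion
`E n → X₁` lifts through `d₁ : X₂ → X₁`, and the lifts assemble to `s : ⊕ E n → X₂` with
`d₁ ∘ s` the inclusion. As `d₁` lands in `ker d₀ ≅ ⊕ E n`, it yields a retraction of `s`, so
`⊕ E n` is a direct summand of the injective module `X₂`.
-/

universe u

open TensorProduct

theorem Module.Injective.of_retract {R : Type*} [Ring R] {M N : Type u}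
    [AddCommGroup M] [Module R M] [AddCommGroup N] [Module R N]
    (hN : Module.Injective R N) (s : M →ₗ[R] N) (r : N →ₗ[R] M)
    (hrs : r ∘ₗ s = LinearMap.id) : Module.Injective R M := by
  constructor
  intro X Y _ _ _ _ f hf g
  obtain ⟨h, hh⟩ := hN.out f hf (s ∘ₗ g)
  refine ⟨r ∘ₗ h, fun x => ?_⟩
  rw [LinearMap.comp_apply, hh, ← LinearMap.comp_apply r, ← LinearMap.comp_assoc, hrs,
    LinearMap.id_comp]

theorem LinearMap.exists_retraction_of_comp_eq {R : Type*} [Ring R] {M X Y : Type*}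
    [AddCommGroup M] [Module R M] [AddCommGroup X] [Module R X] [AddCommGroup Y] [Module R Y]
    {f : M →ₗ[R] Y} (hf : Function.Injective f) {d : X →ₗ[R] Y} (hd : range d ≤ range f)
    {s : M →ₗ[R] X} (hs : d ∘ₗ s = f) : ∃ r : X →ₗ[R] M, r ∘ₗ s = LinearMap.id := by
  refine ⟨(LinearEquiv.ofInjective f hf).symm.toLinearMap ∘ₗ
    d.codRestrict (range f) (fun x => hd (mem_range_self d x)), LinearMap.ext fun x => hf ?_⟩
  simp only [comp_apply, LinearEquiv.coe_coe, LinearEquiv.ofInjective_symm_apply,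
    codRestrict_apply]
  exact LinearMap.congr_fun hs x

theorem Function.exact_ite_even {M : Type*} [AddCommGroup M] (i : ℤ) :
    Function.Exact (fun x : M => if Even (i + 1) then 0 else x)
      (fun x : M => if Even i then 0 else x) := by
  rcases Int.even_or_odd i with hi | hi
  · simp only [hi, Int.not_even_iff_odd.mpr hi.add_one, if_true, if_false]
    exact fun y => ⟨fun _ => ⟨y, rfl⟩, fun _ => rfl⟩
  · simp only [Int.not_even_iff_odd.mpr hi, hi.add_one, if_true, if_false]
    exact fun y => ⟨fun hy => ⟨0, hy.symm⟩, fun ⟨_, hy⟩ => hy.symm⟩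

namespace ModComplex

variable {R : Type u} [CommRing R]

def periodic (R : Type u) [CommRing R] (B : Type u) [AddCommGroup B] [Module R B] :
    ModComplex R where
  X _ := B
  d i := if Even i then 0 else LinearMap.id
  dd i := by
    rcases Int.even_or_odd i with hi | hi
    · simp [hi]
    · simp [Int.not_even_iff_odd.mpr hi, hi.add_one]

section periodic

variable (B : Type u) [AddCommGroup B] [Module R B]

theorem periodic_d_coe (i : ℤ) :
    ⇑((periodic R B).d i) = fun x : B => if Even i then 0 else x := by
  by_cases hi : Even i <;> simp only [periodic, hi, if_true, if_false] <;> rfl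

theorem periodic_d_comp {E : Type u} [AddCommGroup E] [Module R E] (i : ℤ) :
    (fun φ : E →ₗ[R] (periodic R B).X (i + 1) => (periodic R B).d i ∘ₗ φ) =
      fun φ : E →ₗ[R] B => if Even i then 0 else φ := by
  by_cases hi : Even i <;> simp only [periodic, hi, if_true, if_false] <;> rfl

theorem periodic_acyclic : (periodic R B).Acyclic := fun i => by
  rw [periodic_d_coe, periodic_d_coe]
  exact Function.exact_ite_even i

theorem periodic_coHomAcyclic (E : Type u) [AddCommGroup E] [Module R E] :
    (periodic R B).CoHomAcyclic E := fun i => by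
  rw [periodic_d_comp, periodic_d_comp]
  exact Function.exact_ite_even (M := E →ₗ[R] B) i

end periodic

theorem exists_directSum_lift (L : ModComplex R) {ι : Type*} [DecidableEq ι]
    {E : ι → Type u} [∀ n, AddCommGroup (E n)] [∀ n, Module R (E n)]
    (hE : ∀ n, L.CoHomAcyclic (E n)) (i : ℤ) (g : DirectSum ι E →ₗ[R] L.X (i + 1))
    (hg : L.d i ∘ₗ g = 0) :
    ∃ s : DirectSum ι E →ₗ[R] L.X (i + 1 + 1), L.d (i + 1) ∘ₗ s = g := by
  have lift (n : ι) : ∃ χ : E n →ₗ[R] L.X (i + 1 + 1),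
      L.d (i + 1) ∘ₗ χ = g ∘ₗ DirectSum.lof R ι E n :=
    (hE n i _).mp (by simp only [← LinearMap.comp_assoc, hg, LinearMap.zero_comp])
  choose χ hχ using lift
  exact ⟨DirectSum.toModule R ι _ χ, DirectSum.linearMap_ext R fun n => LinearMap.ext fun x => by
    simpa using LinearMap.congr_fun (hχ n) x⟩

end ModComplex

theorem isGorensteinInjective_of_injective {R : Type u} [CommRing R]
    {B : Type u} [AddCommGroup B] [Module R B] (hB : Module.Injective R B) :
    IsGorensteinInjective R B := by
  refine ⟨ModComplex.periodic R B, ModComplex.periodic_acyclic B, fun _ => hB,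
    fun E _ _ _ => ModComplex.periodic_coHomAcyclic B E, LinearMap.id, fun _ _ h => h, ?_⟩
  ext x
  rw [LinearMap.mem_ker, ModComplex.periodic_d_coe]
  exact iff_of_true ⟨x, rfl⟩ (if_pos Even.zero)

/-- If every countable direct sum of Gorenstein injective `R`-modules is
Gorenstein injective, then every countable direct sum of injective
`R`-modules is injective. -/
theorem noetherian_of_directSum_gorensteinInjective {R : Type u} [CommRing R]
    (h : ∀ (B : ℕ → Type u) [∀ n, AddCommGroup (B n)] [∀ n, Module R (B n)],
      (∀ n, IsGorensteinInjective R (B n)) →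
        IsGorensteinInjective R (DirectSum ℕ B))
    (E : ℕ → Type u) [∀ n, AddCommGroup (E n)] [∀ n, Module R (E n)]
    (hE : ∀ n, Module.Injective R (E n)) :
    Module.Injective R (DirectSum ℕ E) := by
  obtain ⟨L, -, hinj, hcoHom, f, hf, hrange⟩ :=
    h E fun n => isGorensteinInjective_of_injective (hE n)
  have hdf : L.d 0 ∘ₗ f = 0 := LinearMap.range_le_ker_iff.mp hrange.le
  obtain ⟨s, hs⟩ := L.exists_directSum_lift (fun n => hcoHom _ (hE n)) 0 f hdf
  have hd : LinearMap.range (L.d (0 + 1)) ≤ LinearMap.range f := by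
    rw [hrange, LinearMap.range_le_ker_iff]
    exact L.dd 0
  obtain ⟨r, hrs⟩ := LinearMap.exists_retraction_of_comp_eq hf hd hs
  exact (hinj _).of_retract s r hrs
end

section
/- Let R be a commutative ring, G a totally reflexive R-module, and I an injective R-module. Then Hom_R(G, I) is a Gorenstein injective R-module. -/
universe u

open TensorProduct

/-!
Write `G = coker(L₁ → L₀)` for a totally acyclic complex `L` of finitely generated projectives.
Since `I` is injective and each `Lᵢ` is flat, `Hom(L, I)` is an acyclic complex of injective
modules, and by left exactness of `Hom(-, I)` its kernel at `Hom(L₀, I)` is `Hom(G, I)`. For an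
injective `E`, `Hom(E, Hom(L, I)) ≅ Hom(E ⊗ L, I)`, and `E ⊗ L ≅ Hom(Hom(L, R), E)` is acyclic
because `Hom(L, R)` is acyclic and `E` is injective; applying `Hom(-, I)` once more keeps it
acyclic.
-/

open Function LinearMap Module

section HomIntoInjective

variable {R : Type u} [CommRing R] (I : Type u) [AddCommGroup I] [Module R I] [Module.Injective R I]
  {M₁ M₂ M₃ : Type u} [AddCommGroup M₁] [Module R M₁] [AddCommGroup M₂] [Module R M₂]
  [AddCommGroup M₃] [Module R M₃]

theorem LinearMap.lcomp_surjective_of_injective {f : M₁ →ₗ[R] M₂} (hf : Injective f) :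
    Surjective (lcomp R I f) := fun g ↦
  Module.Injective.extension_property R I M₁ M₂ f hf g

theorem Module.Injective.exact_lcomp {f : M₁ →ₗ[R] M₂} {g : M₂ →ₗ[R] M₃} (h : Exact f g) :
    Exact (lcomp R I g) (lcomp R I f) := by
  have h' : Exact f g.rangeRestrict :=
    (range g).injective_subtype.comp_exact_iff_exact.mp h
  have hg : lcomp R I g = lcomp R I g.rangeRestrict ∘ₗ lcomp R I (range g).subtype := rfl
  rw [hg, (lcomp_surjective_of_injective I (range g).injective_subtype).comp_exact_iff_exact]
  exact exact_lcomp_of_exact_of_surjective I h' g.surjective_rangeRestrict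

theorem Module.Injective.linearMap_of_flat (P : Type u) [AddCommGroup P] [Module R P]
    [Module.Flat R P] : Module.Injective R (P →ₗ[R] I) := by
  constructor
  intro X Y _ _ _ _ f hf g
  obtain ⟨h, hh⟩ := Module.Injective.extension_property R I _ _ (f.rTensor P)
    (Module.Flat.rTensor_preserves_injective_linearMap f hf) (TensorProduct.lift g)
  refine ⟨TensorProduct.curry h, fun x ↦ ?_⟩
  ext p
  simpa using congr($hh (x ⊗ₜ p))

end HomIntoInjective

section TensorDual

variable {R : Type u} [CommRing R] (E : Type u) [AddCommGroup E] [Module R E]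
  {P₁ P₂ P₃ : Type u} [AddCommGroup P₁] [Module R P₁] [AddCommGroup P₂] [Module R P₂]
  [AddCommGroup P₃] [Module R P₃]

noncomputable def tensorEquivHomDual (P : Type u) [AddCommGroup P] [Module R P]
    [Module.Finite R P] [Module.Projective R P] : E ⊗[R] P ≃ₗ[R] (Dual R P →ₗ[R] E) :=
  TensorProduct.comm R E P ≪≫ₗ TensorProduct.congr (evalEquiv R P) (LinearEquiv.refl R E) ≪≫ₗ
    dualTensorHomEquiv R (Dual R P) E

@[simp]
theorem tensorEquivHomDual_tmul {P : Type u} [AddCommGroup P] [Module R P]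
    [Module.Finite R P] [Module.Projective R P] (e : E) (p : P) (φ : Dual R P) :
    tensorEquivHomDual E P (e ⊗ₜ p) φ = φ p • e := by
  simp [tensorEquivHomDual]

theorem tensorEquivHomDual_comp_lTensor [Module.Finite R P₁] [Module.Projective R P₁]
    [Module.Finite R P₂] [Module.Projective R P₂] (f : P₁ →ₗ[R] P₂) :
    (tensorEquivHomDual E P₂).toLinearMap ∘ₗ f.lTensor E =
      lcomp R E f.dualMap ∘ₗ (tensorEquivHomDual E P₁).toLinearMap := by
  ext e p φ
  simp

variable [Module.Finite R P₁] [Module.Projective R P₁] [Module.Finite R P₂]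
  [Module.Projective R P₂] [Module.Finite R P₃] [Module.Projective R P₃]

theorem Function.Exact.lTensor_of_exact_dualMap [Module.Injective R E]
    {f : P₁ →ₗ[R] P₂} {g : P₂ →ₗ[R] P₃} (h : Exact g.dualMap f.dualMap) :
    Exact (f.lTensor E) (g.lTensor E) :=
  (Exact.iff_of_ladder_linearEquiv (tensorEquivHomDual_comp_lTensor E f).symm
    (tensorEquivHomDual_comp_lTensor E g).symm).mp (Module.Injective.exact_lcomp E h)

end TensorDual

section Currying

variable {R : Type u} [CommRing R] (E I : Type u) [AddCommGroup E] [Module R E]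
  [AddCommGroup I] [Module R I] [Module.Injective R I]
  {P₁ P₂ P₃ : Type u} [AddCommGroup P₁] [Module R P₁] [AddCommGroup P₂] [Module R P₂]
  [AddCommGroup P₃] [Module R P₃]

theorem Function.Exact.compRight_lcomp_of_lTensor {f : P₁ →ₗ[R] P₂} {g : P₂ →ₗ[R] P₃}
    (h : Exact (f.lTensor E) (g.lTensor E)) :
    Exact (compRight (M := E) R (lcomp R I g)) (compRight (M := E) R (lcomp R I f)) := by
  let curry (P : Type u) [AddCommGroup P] [Module R P] :=
    TensorProduct.lift.equiv (.id R) E P I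
  have hcurry {P Q : Type u} [AddCommGroup P] [Module R P] [AddCommGroup Q] [Module R Q]
      (u : P →ₗ[R] Q) :
      (lcomp R I (u.lTensor E)) ∘ₗ (curry Q).toLinearMap =
        (curry P).toLinearMap ∘ₗ compRight R (lcomp R I u) := by
    ext φ e p
    rfl
  exact (Exact.iff_of_ladder_linearEquiv (hcurry g) (hcurry f)).mp
    (Module.Injective.exact_lcomp I h)

end Currying

namespace ModComplex

variable {R : Type u} [CommRing R] (L : ModComplex R)

/-- The differential `L.X i → L.X j` for `i = j + 1`, so that differentials can be indexed by
expressions such as `1 - i` that are not syntactically successors. -/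
def dAt {i j : ℤ} (h : i = j + 1) : L.X i →ₗ[R] L.X j := by
  subst h
  exact L.d j

section Reindexing

variable {L} {i j k : ℤ} (h : i = j + 1) (h' : j = k + 1)

theorem dAt_comp_dAt : L.dAt h' ∘ₗ L.dAt h = 0 := by
  subst h' h
  exact L.dd k

theorem Acyclic.exact_dAt (hL : L.Acyclic) : Exact (L.dAt h) (L.dAt h') := by
  subst h' h
  exact hL k

theorem HomAcyclic.exact_lcomp_dAt {N : Type u} [AddCommGroup N] [Module R N]
    (hL : L.HomAcyclic N) : Exact (lcomp R N (L.dAt h')) (lcomp R N (L.dAt h)) := by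
  subst h' h
  exact hL k

end Reindexing

variable (I : Type u) [AddCommGroup I] [Module R I]

/-- `Hom_R(L, I)`, reindexed so that `(L.dual I).X i = Hom_R(L.X (1 - i), I)`. -/
noncomputable def dual : ModComplex R where
  X i := L.X (1 - i) →ₗ[R] I
  d i := lcomp R I (L.dAt (by omega : 1 - i = 1 - (i + 1) + 1))
  dd i := by
    ext φ x
    simpa using congr(φ ($(L.dAt_comp_dAt _ _) x))

variable {L I}

theorem isKerOf_dual {G : Type u} [AddCommGroup G] [Module R G] (hG : IsCokerOf L G) :
    IsKerOf (L.dual I) (G →ₗ[R] I) := by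
  obtain ⟨p, hp, hker⟩ := hG
  refine ⟨lcomp R I p, lcomp_injective_of_surjective p hp, ?_⟩
  -- `1 - 1` and `1 - 0` reduce to `0` and `1`, so `(L.dual I).d 0` is `lcomp R I (L.d 0)` by `rfl`.
  exact (exact_lcomp_of_exact_of_surjective I (exact_iff.mpr hker) hp).linearMap_ker_eq.symm

variable [Module.Injective R I]

theorem Acyclic.dual (hL : L.Acyclic) : (L.dual I).Acyclic := fun _ ↦
  Module.Injective.exact_lcomp I (hL.exact_dAt _ _)

theorem injective_dual_X [∀ i, Module.Flat R (L.X i)] (i : ℤ) :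
    Module.Injective R ((L.dual I).X i) :=
  Module.Injective.linearMap_of_flat I _

theorem coHomAcyclic_dual [∀ i, Module.Finite R (L.X i)] [∀ i, Module.Projective R (L.X i)]
    (hLR : L.HomAcyclic R) (E : Type u) [AddCommGroup E] [Module R E] [Module.Injective R E] :
    (L.dual I).CoHomAcyclic E := fun _ ↦
  ((hLR.exact_lcomp_dAt _ _).lTensor_of_exact_dualMap E).compRight_lcomp_of_lTensor E I

end ModComplex

/-- If `G` is totally reflexive and `I` is injective, then `Hom_R(G, I)` is
Gorenstein injective. -/
theorem gorensteinInjective_hom_of_totallyReflexive {R : Type u} [CommRing R]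
    (G I : Type u) [AddCommGroup G] [Module R G] [AddCommGroup I] [Module R I]
    (hG : IsTotallyReflexive R G) (hI : Module.Injective R I) :
    IsGorensteinInjective R (G →ₗ[R] I) := by
  obtain ⟨L, ⟨hL, hfgp, hLR⟩, hGL⟩ := hG
  have : ∀ i, Module.Finite R (L.X i) := fun i ↦ (hfgp i).1
  have : ∀ i, Module.Projective R (L.X i) := fun i ↦ (hfgp i).2
  exact ⟨L.dual I, hL.dual, L.injective_dual_X, fun E _ _ _ ↦ L.coHomAcyclic_dual hLR E,
    ModComplex.isKerOf_dual hGL⟩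
end

section
/- Let R be a commutative ring, G a totally reflexive R-module, and S an R-algebra of finite flat dimension. Then S ⊗_R G is a totally reflexive S-module. -/
universe u

open TensorProduct

/-!
Tensoring with `S` keeps the terms finitely generated projective, and `S ⊗ coker = coker` by
right exactness, so what has to be shown is that `S ⊗ L` and `Hom_S(S ⊗ L, S) ≅ S ⊗ Hom_R(L, R)`
are acyclic. Both are `S ⊗ –` applied to an acyclic complex of flat modules, and `M ⊗ –` keeps such
a complex acyclic whenever `M` has finite flat dimension: induct along `0 → K → F → M → 0` with `F`
flat; as the terms are flat, `0 → K ⊗ C → F ⊗ C → M ⊗ C → 0` is an exact sequence of complexes,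
and its long exact homology sequence carries acyclicity from `K ⊗ C` and `F ⊗ C` to `M ⊗ C`.
-/

section Tensor

open LinearMap

-- The induction on flat dimension needs no more of a complex than this, and both `L` and
-- `Hom_R(L, R)` provide it.
def HasFlatExactTail (R : Type u) [CommRing R] :
    ℕ → ∀ {B C : Type u} [AddCommGroup B] [Module R B] [AddCommGroup C] [Module R C],
      (B →ₗ[R] C) → Prop
  | 0, _, _, _, _, _, _, _ => True
  | n + 1, _, C, _, _, _, _, b =>
    ∃ (D : Type u) (_ : AddCommGroup D) (_ : Module R D) (c : C →ₗ[R] D),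
      Module.Flat R D ∧ Function.Exact b c ∧ HasFlatExactTail R n c

variable {R : Type u} [CommRing R]

theorem lTensor_rTensor_comm {A B C D : Type*} [AddCommGroup A] [Module R A]
    [AddCommGroup B] [Module R B] [AddCommGroup C] [Module R C] [AddCommGroup D] [Module R D]
    (f : A →ₗ[R] B) (g : C →ₗ[R] D) (x : A ⊗[R] C) :
    g.lTensor B (f.rTensor C x) = f.rTensor D (g.lTensor A x) := by
  rw [← comp_apply, ← comp_apply, lTensor_comp_rTensor, rTensor_comp_lTensor]

-- The long exact homology sequence of `0 → K ⊗ – → F ⊗ – → M ⊗ – → 0`, at one spot.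
theorem exact_lTensor_of_shortExact {K F M A B C D : Type*}
    [AddCommGroup K] [Module R K] [AddCommGroup F] [Module R F] [AddCommGroup M] [Module R M]
    [AddCommGroup A] [Module R A] [AddCommGroup B] [Module R B] [AddCommGroup C] [Module R C]
    [AddCommGroup D] [Module R D] [Module.Flat R F] [Module.Flat R D]
    {ι : K →ₗ[R] F} {π : F →ₗ[R] M} (hι : Function.Injective ι) (hιπ : Function.Exact ι π)
    (hπ : Function.Surjective π) {a : A →ₗ[R] B} {b : B →ₗ[R] C} {c : C →ₗ[R] D}
    (hab : Function.Exact a b) (hcb : c ∘ₗ b = 0)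
    (hK : Function.Exact (b.lTensor K) (c.lTensor K)) :
    Function.Exact (a.lTensor M) (b.lTensor M) := by
  refine fun z ↦ ⟨fun hz ↦ ?_, ?_⟩
  · obtain ⟨y, rfl⟩ := π.rTensor_surjective B hπ z
    obtain ⟨k, hk⟩ : ∃ k, ι.rTensor C k = b.lTensor F y :=
      (rTensor_exact C hιπ hπ _).mp (by rw [← lTensor_rTensor_comm, hz])
    have hck : c.lTensor K k = 0 := by
      apply Module.Flat.rTensor_preserves_injective_linearMap (M := D) ι hι
      rw [map_zero, ← lTensor_rTensor_comm, hk, ← comp_apply, ← lTensor_comp, hcb,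
        lTensor_zero, LinearMap.zero_apply]
    obtain ⟨k', rfl⟩ := (hK k).mp hck
    obtain ⟨x, hx⟩ : ∃ x, a.lTensor F x = y - ι.rTensor B k' :=
      (Module.Flat.lTensor_exact F hab _).mp (by rw [map_sub, lTensor_rTensor_comm, hk, sub_self])
    refine ⟨π.rTensor A x, ?_⟩
    rw [lTensor_rTensor_comm, hx, map_sub, ← comp_apply (rTensor B π), ← rTensor_comp,
      hιπ.linearMap_comp_eq_zero, rTensor_zero, LinearMap.zero_apply, sub_zero]
  · rintro ⟨x, rfl⟩
    rw [← comp_apply, ← lTensor_comp, hab.linearMap_comp_eq_zero, lTensor_zero,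
      LinearMap.zero_apply]

theorem Function.Exact.lTensor_of_flatDimLe {n : ℕ} {M : Type u} [AddCommGroup M] [Module R M]
    (hM : FlatDimLe R n M) {A B C : Type u} [AddCommGroup A] [Module R A]
    [AddCommGroup B] [Module R B] [AddCommGroup C] [Module R C]
    {a : A →ₗ[R] B} {b : B →ₗ[R] C} (hab : Function.Exact a b) (hb : HasFlatExactTail R n b) :
    Function.Exact (a.lTensor M) (b.lTensor M) := by
  induction n generalizing M A B C with
  | zero =>
    have : Module.Flat R M := hM
    exact Module.Flat.lTensor_exact M hab
  | succ n ih =>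
    obtain ⟨F, _, _, π, hF, hπ, hK⟩ := hM
    obtain ⟨D, _, _, c, hD, hbc, hc⟩ := hb
    exact exact_lTensor_of_shortExact (ker π).injective_subtype π.exact_subtype_ker_map hπ hab
      hbc.linearMap_comp_eq_zero (ih hK hbc hc)

namespace ModComplex

variable {L : ModComplex R}

theorem Acyclic.hasFlatExactTail (hL : L.Acyclic) (hflat : ∀ i, Module.Flat R (L.X i))
    (n : ℕ) (i : ℤ) : HasFlatExactTail R n (L.d i) := by
  induction n generalizing i with
  | zero => trivial
  | succ n ih =>
    obtain ⟨j, rfl⟩ : ∃ j, i = j + 1 := ⟨i - 1, by ring⟩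
    exact ⟨_, _, _, L.d j, hflat j, hL j, ih j⟩

theorem HomAcyclic.hasFlatExactTail_dualMap (hL : L.HomAcyclic R)
    (hflat : ∀ i, Module.Flat R (Module.Dual R (L.X i))) (n : ℕ) (i : ℤ) :
    HasFlatExactTail R n (L.d i).dualMap := by
  induction n generalizing i with
  | zero => trivial
  | succ n ih => exact ⟨_, _, _, (L.d (i + 1)).dualMap, hflat (i + 1 + 1), hL i, ih (i + 1)⟩

theorem Acyclic.tensorAcyclic (hL : L.Acyclic) (hflat : ∀ i, Module.Flat R (L.X i)) {n : ℕ}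
    {M : Type u} [AddCommGroup M] [Module R M] (hM : FlatDimLe R n M) : L.TensorAcyclic M :=
  fun i ↦ (hL i).lTensor_of_flatDimLe hM (hL.hasFlatExactTail hflat n i)

end ModComplex

section DualBaseChange

variable (S : Type*) [CommRing S] [Algebra R S]

noncomputable def dualBaseChangeEquiv (X : Type*) [AddCommGroup X] [Module R X]
    [Module.Finite R X] [Module.Projective R X] :
    S ⊗[R] Module.Dual R X ≃ₗ[R] Module.Dual S (S ⊗[R] X) :=
  TensorProduct.comm R S (Module.Dual R X) ≪≫ₗ dualTensorHomEquiv R X S ≪≫ₗ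
    (LinearMap.liftBaseChangeEquiv S).restrictScalars R

theorem dualBaseChangeEquiv_comp_lTensor_dualMap {X Y : Type*} [AddCommGroup X] [Module R X]
    [Module.Finite R X] [Module.Projective R X] [AddCommGroup Y] [Module R Y]
    [Module.Finite R Y] [Module.Projective R Y] (u : X →ₗ[R] Y) :
    (dualBaseChangeEquiv S X).toLinearMap ∘ₗ u.dualMap.lTensor S =
      (u.baseChange S).dualMap.restrictScalars R ∘ₗ (dualBaseChangeEquiv S Y).toLinearMap := by
  ext s φ : 3
  apply TensorProduct.AlgebraTensorModule.ext
  intro t x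
  simp [dualBaseChangeEquiv]

end DualBaseChange

namespace ModComplex

variable (S : Type u) [CommRing S] [Algebra R S]

noncomputable def baseChange (L : ModComplex R) : ModComplex S where
  X i := S ⊗[R] L.X i
  d i := (L.d i).baseChange S
  dd i := by rw [← LinearMap.baseChange_comp, L.dd i, LinearMap.baseChange_zero]

variable {S} {L : ModComplex R}

theorem FGProj.baseChange (hL : L.FGProj) : (L.baseChange S).FGProj := fun i ↦
  have := (hL i).1
  have := (hL i).2
  ⟨inferInstanceAs (Module.Finite S (S ⊗[R] L.X i)),
    inferInstanceAs (Module.Projective S (S ⊗[R] L.X i))⟩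

theorem TensorAcyclic.acyclic_baseChange (hL : L.TensorAcyclic S) : (L.baseChange S).Acyclic :=
  hL

theorem homAcyclic_baseChange (hL : L.FGProj)
    (h : ∀ i, Function.Exact ((L.d i).dualMap.lTensor S) ((L.d (i + 1)).dualMap.lTensor S)) :
    (L.baseChange S).HomAcyclic S := by
  intro i
  obtain ⟨_, _⟩ := hL i
  obtain ⟨_, _⟩ := hL (i + 1)
  obtain ⟨_, _⟩ := hL (i + 1 + 1)
  exact (h i).of_ladder_linearEquiv_of_exact (dualBaseChangeEquiv_comp_lTensor_dualMap S _).symm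
    (dualBaseChangeEquiv_comp_lTensor_dualMap S _).symm

theorem TotallyAcyclic.baseChange (hL : L.TotallyAcyclic) {n : ℕ} (hS : FlatDimLe R n S) :
    (L.baseChange S).TotallyAcyclic := by
  obtain ⟨hL, hFG, hHom⟩ := hL
  have hflat : ∀ i, Module.Flat R (L.X i) := fun i ↦ have := (hFG i).2; inferInstance
  have hflatDual : ∀ i, Module.Flat R (Module.Dual R (L.X i)) := fun i ↦
    have := (hFG i).1; have := (hFG i).2; inferInstance
  refine ⟨(hL.tensorAcyclic hflat hS).acyclic_baseChange, hFG.baseChange, ?_⟩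
  exact homAcyclic_baseChange hFG fun i ↦
    (hHom i).lTensor_of_flatDimLe hS (hHom.hasFlatExactTail_dualMap hflatDual n (i + 1))

end ModComplex

theorem IsCokerOf.baseChange {L : ModComplex R} {M : Type u} [AddCommGroup M] [Module R M]
    (S : Type u) [CommRing S] [Algebra R S] (hM : IsCokerOf L M) :
    IsCokerOf (L.baseChange S) (S ⊗[R] M) := by
  obtain ⟨π, hπ, hker⟩ := hM
  refine ⟨π.baseChange S, π.lTensor_surjective S hπ, ?_⟩
  exact LinearMap.exact_iff.mp (lTensor_exact S (LinearMap.exact_iff.mpr hker) hπ)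

end Tensor

/-- Base change of a totally reflexive module along an algebra of finite
flat dimension is totally reflexive. -/
theorem totallyReflexive_baseChange {R : Type u} [CommRing R]
    (S : Type u) [CommRing S] [Algebra R S]
    (hS : ∃ n : ℕ, FlatDimLe R n S)
    (G : Type u) [AddCommGroup G] [Module R G]
    (hG : IsTotallyReflexive R G) :
    IsTotallyReflexive S (S ⊗[R] G) := by
  obtain ⟨n, hS⟩ := hS
  obtain ⟨L, hL, hG⟩ := hG
  exact ⟨L.baseChange S, hL.baseChange hS, hG.baseChange S⟩
end

section
/- Let R be a commutative ring and M an R-module of finite projective dimension. Then the Gorenstein projective dimension of M equals its projective dimension: Gpd_R M = pd_R M. -/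
/-!
Projective modules are Gorenstein projective (via the contractible complex `P ⊕ P`), which
gives `Gpd M ≤ pd M`. Conversely, if `G` is Gorenstein projective then `Ext^(i+1)(G, Q) = 0`
for every projective `Q`: for `i = 0` this is the `Hom(-, Q)`-exactness of the complete
resolution, and for larger `i` one shifts to the syzygy, which is again Gorenstein projective.
Dimension shifting along a Gorenstein projective resolution then kills `Ext^i(M, Q)` for
`i > Gpd M`. Finally, if `pd M ≤ n` then `Ext^n(M, -)` is right exact, so it vanishes as soon
as it vanishes on projectives; descending from `n` gives `pd M ≤ Gpd M`.
-/

universe u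

open TensorProduct

open CategoryTheory Abelian Limits

section GorensteinProjective

variable {R : Type u} [CommRing R]

theorem isGorensteinProjective_of_projective {M : Type u} [AddCommGroup M] [Module R M]
    [Module.Projective R M] : IsGorensteinProjective R M := by
  let d : M × M →ₗ[R] M × M := LinearMap.inl R M M ∘ₗ LinearMap.snd R M M
  refine ⟨⟨fun _ => M × M, fun _ => d, fun _ => by ext <;> simp [d]⟩, ?_,
    fun _ => inferInstance, ?_, LinearMap.snd R M M, fun m => ⟨(0, m), rfl⟩, ?_⟩
  · intro i y
    refine ⟨fun hy => ⟨(0, y.1), Prod.ext rfl ?_⟩, ?_⟩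
    · simpa [d] using (congrArg Prod.fst hy).symm
    · rintro ⟨x, rfl⟩
      simp [d]
  · intro Q _ _ _ i φ
    refine ⟨fun hφ => ⟨φ ∘ₗ LinearMap.inr R M M ∘ₗ LinearMap.fst R M M, ?_⟩, ?_⟩
    · -- `φ` vanishes on the image `M × 0` of `d`, so it only depends on the second coordinate
      refine LinearMap.ext fun ⟨a, b⟩ => ?_
      have ha : φ (a, 0) = 0 := by simpa [d] using LinearMap.congr_fun hφ (0, a)
      simpa [d, ha] using (map_add φ (a, 0) (0, b)).symm
    · rintro ⟨χ, rfl⟩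
      ext <;> simp [d] <;> exact map_zero χ
  · ext ⟨a, b⟩
    simp only [LinearMap.mem_ker, LinearMap.snd_apply, LinearMap.mem_range]
    refine ⟨fun hb => ⟨(0, a), by simp [d, hb]⟩, ?_⟩
    rintro ⟨x, hx⟩
    simpa [d] using (congrArg Prod.snd hx).symm

theorem gProjDimLe_of_projDimLe : ∀ {n : ℕ} {M : Type u} [AddCommGroup M] [Module R M],
    ProjDimLe R n M → GProjDimLe R n M
  | 0, _, _, _, h => have : Module.Projective R _ := h; isGorensteinProjective_of_projective
  | _ + 1, _, _, _, ⟨P, _, _, f, _, hf, hK⟩ =>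
    ⟨P, _, _, f, isGorensteinProjective_of_projective, hf, gProjDimLe_of_projDimLe hK⟩

abbrev ModComplex.shift (L : ModComplex R) : ModComplex R where
  X i := L.X (i + 1)
  d i := L.d (i + 1)
  dd i := L.dd (i + 1)

theorem isGorensteinProjective_ker {G : Type u} [AddCommGroup G] [Module R G]
    (L : ModComplex R) (hL : L.Acyclic) (hP : ∀ i, Module.Projective R (L.X i))
    (hHom : ∀ (Q : Type u) [AddCommGroup Q] [Module R Q],
      Module.Projective R Q → L.HomAcyclic Q)
    (f : L.X 0 →ₗ[R] G) (hf : LinearMap.ker f = LinearMap.range (L.d 0)) :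
    IsGorensteinProjective R (LinearMap.ker f) := by
  rw [hf]
  refine ⟨L.shift, fun i => hL (i + 1), fun i => hP (i + 1), fun Q _ _ hQ i => hHom Q hQ (i + 1),
    (L.d 0).rangeRestrict, LinearMap.surjective_rangeRestrict _, ?_⟩
  rw [LinearMap.ker_rangeRestrict]
  exact LinearMap.exact_iff.mp (hL 0)

theorem exists_comp_subtype_eq_of_homAcyclic {G Q : Type u} [AddCommGroup G] [Module R G]
    [AddCommGroup Q] [Module R Q] (L : ModComplex R) (hL : L.HomAcyclic Q)
    (f : L.X 0 →ₗ[R] G) (hf : LinearMap.ker f = LinearMap.range (L.d 0))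
    (φ : LinearMap.ker f →ₗ[R] Q) :
    ∃ ψ : L.X 0 →ₗ[R] Q, ψ ∘ₗ (LinearMap.ker f).subtype = φ := by
  have hd : ∀ x, L.d 0 x ∈ LinearMap.ker f := fun x => hf ▸ LinearMap.mem_range_self _ x
  let d₀ : L.X (0 + 1) →ₗ[R] LinearMap.ker f := (L.d 0).codRestrict _ hd
  have hd₀ : d₀ ∘ₗ L.d (0 + 1) = 0 := by
    ext x
    simpa [d₀] using LinearMap.congr_fun (L.dd 0) x
  obtain ⟨ψ, hψ⟩ := (hL 0 (φ ∘ₗ d₀)).mp <| by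
    change (φ ∘ₗ d₀) ∘ₗ L.d (0 + 1) = 0
    rw [LinearMap.comp_assoc, hd₀, LinearMap.comp_zero]
  refine ⟨ψ, LinearMap.ext fun ⟨y, hy⟩ => ?_⟩
  obtain ⟨x, rfl⟩ := (hf ▸ hy : y ∈ LinearMap.range (L.d 0))
  exact LinearMap.congr_fun hψ x

end GorensteinProjective

section ProjectiveDimension

variable {C : Type*} [Category C] [Abelian C] [HasExt C] [EnoughProjectives C]

theorem hasProjectiveDimensionLT_of_ext_projective_eq_zero (X : C) (n : ℕ)
    [HasProjectiveDimensionLT X (n + 1)]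
    (hX : ∀ (Q : C) [Projective Q] (e : Ext X Q n), e = 0) :
    HasProjectiveDimensionLT X n := by
  refine HasProjectiveDimensionLT.mk fun i hi Y e => ?_
  obtain rfl | hi := hi.eq_or_lt
  · -- `Ext^i(X, -)` is right exact, since `Ext^(i+1)(X, -)` vanishes
    let p := (EnoughProjectives.presentation Y).some
    have hS : (ShortComplex.mk _ _ (kernel.condition p.f)).ShortExact :=
      { exact := ShortComplex.exact_kernel p.f }
    obtain ⟨e', rfl⟩ := Ext.covariant_sequence_exact₃ X hS e rfl
      (Ext.eq_zero_of_hasProjectiveDimensionLT _ (n + 1) le_rfl)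
    rw [hX p.p e', Ext.zero_comp]
  · exact e.eq_zero_of_hasProjectiveDimensionLT (n + 1) hi

theorem hasProjectiveDimensionLT_of_forall_ge_ext_projective_eq_zero (X : C) (m n : ℕ)
    (hXn : HasProjectiveDimensionLT X n)
    (hX : ∀ i, m ≤ i → ∀ (Q : C) [Projective Q] (e : Ext X Q i), e = 0) :
    HasProjectiveDimensionLT X m := by
  induction n with
  | zero => exact hasProjectiveDimensionLT_of_ge X 0 m (Nat.zero_le m)
  | succ n ih =>
    by_cases hmn : m ≤ n
    · exact ih (hasProjectiveDimensionLT_of_ext_projective_eq_zero X n (hX n hmn))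
    · exact hasProjectiveDimensionLT_of_ge X (n + 1) m (by omega)

end ProjectiveDimension

section Ext

variable {R : Type u} [CommRing R]

theorem projDimLe_iff_hasProjectiveDimensionLT {n : ℕ} {M : Type u} [AddCommGroup M]
    [Module R M] : ProjDimLe R n M ↔ HasProjectiveDimensionLT (ModuleCat.of R M) (n + 1) := by
  induction n generalizing M with
  | zero => exact (IsProjective.iff_projective M).trans projective_iff_hasProjectiveDimensionLT_one
  | succ n ih =>
    constructor
    · rintro ⟨P, _, _, f, hP, hf, hK⟩
      have := (IsProjective.iff_projective P).mp hP
      exact ((LinearMap.shortExact_shortComplexKer hf).hasProjectiveDimensionLT_X₃_iff n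
        this).mpr (ih.mp hK)
    · intro h
      have hf := Finsupp.linearCombination_id_surjective R M
      have := (IsProjective.iff_projective (R := R) (M →₀ R)).mp inferInstance
      have hS := LinearMap.shortExact_shortComplexKer hf
      exact ⟨M →₀ R, _, _, _, inferInstance, hf,
        ih.mpr ((hS.hasProjectiveDimensionLT_X₃_iff n this).mp h)⟩

theorem ext_eq_zero_of_isGorensteinProjective (n : ℕ) {G : Type u} [AddCommGroup G]
    [Module R G] (hG : IsGorensteinProjective R G) (Q : ModuleCat.{u} R) [Projective Q]
    (e : Ext (ModuleCat.of R G) Q (n + 1)) : e = 0 := by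
  obtain ⟨L, hL, hP, hHom, f, hf, hker⟩ := hG
  have hS := LinearMap.shortExact_shortComplexKer hf
  have := (IsProjective.iff_projective _).mp (hP 0)
  obtain ⟨x, rfl⟩ := precomp_extClass_surjective_of_projective_X₂ Q hS n e
  match n, x with
  | 0, x =>
    obtain ⟨φ, rfl⟩ := Ext.homEquiv₀.symm.surjective x
    obtain ⟨ψ, hψ⟩ :=
      exists_comp_subtype_eq_of_homAcyclic L (hHom Q inferInstance) f hker φ.hom
    have hφ : φ = f.shortComplexKer.f ≫ ModuleCat.ofHom ψ := by
      ext
      simp [← hψ]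
    rw [Ext.homEquiv₀_symm_apply, hφ, ← Ext.mk₀_comp_mk₀]
    exact hS.extClass_comp_assoc (h := add_comm 1 0) (Ext.mk₀ (ModuleCat.ofHom ψ))
  | n + 1, x =>
    rw [ext_eq_zero_of_isGorensteinProjective n (isGorensteinProjective_ker L hL hP hHom f hker)
      Q x]
    exact map_zero _

theorem ext_eq_zero_of_gProjDimLe {m : ℕ} {M : Type u} [AddCommGroup M] [Module R M]
    (hM : GProjDimLe R m M) (Q : ModuleCat.{u} R) [Projective Q] {i : ℕ} (hi : m < i)
    (e : Ext (ModuleCat.of R M) Q i) : e = 0 := by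
  induction m generalizing M i with
  | zero =>
    obtain ⟨i, rfl⟩ : ∃ j, i = j + 1 := ⟨i - 1, by omega⟩
    exact ext_eq_zero_of_isGorensteinProjective i hM Q e
  | succ m ih =>
    obtain ⟨G, _, _, g, hG, hg, hK⟩ := hM
    obtain ⟨j, rfl⟩ : ∃ j, i = j + 1 := ⟨i - 1, by omega⟩
    have hS := LinearMap.shortExact_shortComplexKer hg
    obtain ⟨x, rfl⟩ := Ext.contravariant_sequence_exact₃ hS Q e
      (ext_eq_zero_of_isGorensteinProjective j hG Q _) (add_comm 1 j)
    rw [ih hK (by omega) x, Ext.comp_zero]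

theorem projDimLe_of_gProjDimLe {m n : ℕ} {M : Type u} [AddCommGroup M] [Module R M]
    (hm : GProjDimLe R m M) (hn : ProjDimLe R n M) : ProjDimLe R m M := by
  rw [projDimLe_iff_hasProjectiveDimensionLT] at hn ⊢
  exact hasProjectiveDimensionLT_of_forall_ge_ext_projective_eq_zero _ (m + 1) (n + 1) hn
    fun i hi Q _ e => ext_eq_zero_of_gProjDimLe hm Q hi e

end Ext

/-- If `M` has finite projective dimension, then its Gorenstein projective
dimension equals its projective dimension. -/
theorem gProjDim_eq_projDim_of_finite_projDim {R : Type u} [CommRing R]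
    (M : Type u) [AddCommGroup M] [Module R M]
    (h : ∃ n : ℕ, ProjDimLe R n M) :
    gProjDim R M = projDim R M := by
  obtain ⟨n, hn⟩ := h
  have hLe (m : ℕ) : GProjDimLe R m M ↔ ProjDimLe R m M :=
    ⟨fun hm => projDimLe_of_gProjDimLe hm hn, gProjDimLe_of_projDimLe⟩
  simp only [gProjDim, projDim, hLe]
end

section
/- Let R be a quasi-Frobenius ring (self-injective Noetherian). Then every R-module is Gorenstein projective and every R-module is Gorenstein injective. -/
universe u

open TensorProduct

/-!
Over a Noetherian ring a direct sum of injective modules is injective, so when `R` is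
self-injective every free module is injective. The double annihilator property
`Ann (Ann I) = I` embeds every cyclic module `R ⧸ I` into some `Rⁿ`. A maximal independent family
of cyclic submodules of `M` has an essential sum; extending the embedding of that sum into a free
module, which is injective, therefore gives an embedding of `M` into a free module. Consequently
projective and injective modules coincide, and splicing a free resolution of `M` with a
coresolution by free modules gives an acyclic complex of projective-injective modules, on which
`Hom(-, Q)` and `Hom(E, -)` are exact because `Q` is injective and `E` is projective.
-/

open Function

namespace Module.Injective

variable {R : Type u} [Ring R] {A B E : Type u} [AddCommGroup A] [Module R A]
  [AddCommGroup B] [Module R B] [AddCommGroup E] [Module R E] [Module.Injective R E]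

theorem exists_comp_eq_of_ker_le (θ : A →ₗ[R] B) (ψ : A →ₗ[R] E)
    (h : LinearMap.ker θ ≤ LinearMap.ker ψ) : ∃ g : B →ₗ[R] E, g ∘ₗ θ = ψ := by
  obtain ⟨g, hg⟩ := Module.Injective.extension_property R E _ _
    ((LinearMap.ker θ).liftQ θ le_rfl)
    (LinearMap.ker_eq_bot.1 (Submodule.ker_liftQ_eq_bot _ _ _ le_rfl))
    ((LinearMap.ker θ).liftQ ψ h)
  refine ⟨g, LinearMap.ext fun a => ?_⟩
  simpa using LinearMap.congr_fun hg (Submodule.Quotient.mk a)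

theorem of_retract_s18 (i : A →ₗ[R] E) (r : E →ₗ[R] A) (hri : r ∘ₗ i = LinearMap.id) :
    Module.Injective R A where
  out X Y _ _ _ _ f hf g := by
    obtain ⟨h, hh⟩ := Module.Injective.extension_property R E X Y f hf (i ∘ₗ g)
    exact ⟨r ∘ₗ h, fun x => by
      simpa using congr(r $(LinearMap.congr_fun hh x)).trans (LinearMap.congr_fun hri (g x))⟩

theorem of_projective [Module.Projective R A] [Module.Injective R (A →₀ R)] :
    Module.Injective R A := by
  obtain ⟨s, hs⟩ := Module.projective_def'.1 ‹Module.Projective R A›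
  exact of_retract_s18 s _ hs

theorem projective_of_embedding [Module.Projective R B] (f : E →ₗ[R] B)
    (hf : Function.Injective f) : Module.Projective R E := by
  obtain ⟨r, hr⟩ := Module.Injective.extension_property R E _ _ f hf LinearMap.id
  exact Module.Projective.of_split f r hr

theorem finsupp [IsNoetherianRing R] (ι : Type u) : Module.Injective R (ι →₀ E) := by
  classical
  refine Module.Baer.injective fun I g => ?_
  obtain ⟨t, ht⟩ : (LinearMap.range g).FG := by
    rw [LinearMap.range_eq_map]; exact Module.Finite.fg_top.map g
  set S : Set ι := ↑(t.biUnion Finsupp.support)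
  have hS : LinearMap.range g ≤ Finsupp.supported E R S := by
    rw [← ht, Submodule.span_le]
    exact fun v hv => (Finsupp.mem_supported _ _).2 fun i hi =>
      Finset.mem_coe.2 (Finset.mem_biUnion.2 ⟨v, hv, hi⟩)
  -- `I` is finitely generated, so `g` lands in a finite sub-sum, a finite product of injectives
  let e := (Finsupp.supportedEquivFinsupp (M := E) (R := R) S).trans
    (Finsupp.linearEquivFunOnFinite R E S)
  obtain ⟨h, hh⟩ := Module.Injective.extension_property R _ I R I.subtype Subtype.val_injective
    (e.toLinearMap ∘ₗ g.codRestrict _ fun y => hS ⟨y, rfl⟩)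
  refine ⟨(Finsupp.supported E R S).subtype ∘ₗ e.symm.toLinearMap ∘ₗ h, fun x hx => ?_⟩
  simpa using congr(((Finsupp.supported E R S).subtype ∘ₗ e.symm.toLinearMap)
    $(LinearMap.congr_fun hh ⟨x, hx⟩))

end Module.Injective

section Lattice

variable {α : Type*} [CompleteLattice α] [IsModularLattice α]

theorem sSupIndep.insert {s : Set α} {a : α} (hs : sSupIndep s) (ha : Disjoint a (sSup s)) :
    sSupIndep (insert a s) := by
  by_cases has : a ∈ s
  · rwa [Set.insert_eq_of_mem has]
  intro b hb
  rcases hb with rfl | hb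
  · rwa [Set.insert_sdiff_self_of_notMem has]
  have hab : b ≠ a := fun h => has (h ▸ hb)
  rw [Set.insert_sdiff_of_notMem _ (Set.mem_singleton_iff.not.2 hab.symm), sSup_insert, sup_comm]
  refine (hs hb).disjoint_sup_right_of_disjoint_sup_left (ha.symm.mono_left ?_)
  exact sup_le (le_sSup hb) (sSup_le_sSup Set.sdiff_subset)

theorem exists_sSupIndep_subset_eq_bot_of_disjoint [IsCompactlyGenerated α] (C : Set α) :
    ∃ s ⊆ C, sSupIndep s ∧ ∀ c ∈ C, Disjoint c (sSup s) → c = ⊥ := by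
  obtain ⟨s, ⟨hsC, hs⟩, hmax⟩ := zorn_subset {s : Set α | s ⊆ C ∧ sSupIndep s}
    fun c hc hchain => ⟨⋃₀ c, ⟨Set.sUnion_subset fun t ht => (hc ht).1,
      iSupIndep_sUnion_of_directed hchain.directedOn fun t ht => (hc ht).2⟩,
      fun _ => Set.subset_sUnion_of_mem⟩
  refine ⟨s, hsC, hs, fun c hc hdisj => ?_⟩
  have hcs : c ∈ s :=
    hmax ⟨Set.insert_subset hc hsC, hs.insert hdisj⟩ (Set.subset_insert c s) (Set.mem_insert c s)
  exact disjoint_self.1 (hdisj.mono_right (le_sSup hcs))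

end Lattice

theorem exists_injective_finsupp_of_forall_span_singleton {R : Type u} [Ring R]
    {M : Type u} [AddCommGroup M] [Module R M]
    (hfree : ∀ ι : Type u, Module.Injective R (ι →₀ R))
    (hcyc : ∀ x : M, ∃ (n : ℕ) (f : (R ∙ x) →ₗ[R] (Fin n →₀ R)), Injective f) :
    ∃ (ι : Type u) (f : M →ₗ[R] (ι →₀ R)), Injective f := by
  obtain ⟨s, hsC, hs, hess⟩ := exists_sSupIndep_subset_eq_bot_of_disjoint
    {N : Submodule R M | ∃ (n : ℕ) (f : N →ₗ[R] (Fin n →₀ R)), Injective f}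
  choose n f hf using fun a : s => hsC a.2
  let incl : (Π₀ a : s, (a : Submodule R M)) →ₗ[R] M :=
    DFinsupp.lsum ℕ fun a => (a : Submodule R M).subtype
  let e : (Π₀ a : s, (a : Submodule R M)) →ₗ[R] ((Σ a : s, Fin (n a)) →₀ R) :=
    (sigmaFinsuppLequivDFinsupp R).symm.toLinearMap ∘ₗ DFinsupp.mapRange.linearMap f
  have he : Injective e := (sigmaFinsuppLequivDFinsupp R).symm.injective.comp
    ((DFinsupp.mapRange_injective _ fun a => map_zero (f a)).2 hf)
  obtain ⟨g, hg⟩ := (hfree _).extension_property R _ _ _ incl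
    ((sSupIndep_iff s).1 hs).dfinsupp_lsum_injective e
  have hdisj : Disjoint (LinearMap.ker g) (sSup s) := by
    rw [sSup_eq_iSup', Submodule.iSup_eq_range_dfinsupp_lsum, Submodule.disjoint_def]
    rintro _ hy ⟨z, rfl⟩
    have hz : e z = e 0 := by rw [← hg, map_zero]; exact hy
    rw [he hz, map_zero]
  refine ⟨_, g, LinearMap.ker_eq_bot.1 ?_⟩
  by_contra hne
  obtain ⟨x, hx, hx0⟩ := Submodule.exists_mem_ne_zero_of_ne_bot hne
  exact hx0 <| Submodule.span_singleton_eq_bot.1 <|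
    hess _ (hcyc x) (hdisj.mono_left ((Submodule.span_singleton_le_iff_mem _ _).2 hx))

section SelfInjective

variable {R : Type u} [CommRing R]

theorem ker_toSpanSingleton_pi {n : ℕ} (a : Fin n → R) :
    LinearMap.ker (LinearMap.toSpanSingleton R (Fin n → R) a) =
      (Submodule.span R (Set.range a)).annihilator := by
  ext r
  simp [Submodule.mem_annihilator_span, funext_iff]

theorem Ideal.annihilator_annihilator_of_selfInjective (hR : Module.Injective R R) {I : Ideal R}
    (hI : I.FG) : I.annihilator.annihilator = I := by
  refine le_antisymm (fun x hx => ?_) fun x hx => Submodule.mem_annihilator.2 fun r hr =>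
    by simpa [mul_comm] using Submodule.mem_annihilator.1 hr x hx
  obtain ⟨n, a, rfl⟩ := Submodule.fg_iff_exists_fin_generating_family.1 hI
  obtain ⟨g, hg⟩ := Module.Injective.exists_comp_eq_of_ker_le
    (LinearMap.toSpanSingleton R (Fin n → R) a) (LinearMap.toSpanSingleton R R x) <| by
      rw [ker_toSpanSingleton_pi]
      intro r hr
      simpa [mul_comm] using Submodule.mem_annihilator.1 hx r hr
  have hx : x = ∑ k, g (Pi.single k (a k)) := by
    simpa [← map_sum, Finset.univ_sum_single] using (LinearMap.congr_fun hg 1).symm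
  rw [hx]
  refine Ideal.sum_mem _ fun k _ => ?_
  rw [← mul_one (a k), ← smul_eq_mul, Pi.single_smul', map_smul, smul_eq_mul]
  exact Ideal.mul_mem_right _ _ (Submodule.subset_span ⟨k, rfl⟩)

variable [IsNoetherianRing R]

theorem exists_injective_quotient_to_pi (hR : Module.Injective R R) (I : Ideal R) :
    ∃ (n : ℕ) (f : (R ⧸ I) →ₗ[R] (Fin n → R)), Injective f := by
  obtain ⟨n, b, hb⟩ :=
    Submodule.fg_iff_exists_fin_generating_family.1 (IsNoetherian.noetherian I.annihilator)
  have hker : LinearMap.ker (LinearMap.toSpanSingleton R (Fin n → R) b) = I := by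
    rw [ker_toSpanSingleton_pi, hb,
      Ideal.annihilator_annihilator_of_selfInjective hR (IsNoetherian.noetherian I)]
  exact ⟨n, I.liftQ _ hker.ge, LinearMap.ker_eq_bot.1 (Submodule.ker_liftQ_eq_bot _ _ _ hker.le)⟩

theorem exists_injective_span_singleton_to_finsupp (hR : Module.Injective R R)
    {M : Type u} [AddCommGroup M] [Module R M] (x : M) :
    ∃ (n : ℕ) (f : (R ∙ x) →ₗ[R] (Fin n →₀ R)), Injective f := by
  obtain ⟨n, f, hf⟩ := exists_injective_quotient_to_pi hR (Ideal.torsionOf R M x)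
  let e := Ideal.quotTorsionOfEquivSpanSingleton R M x
  refine ⟨n, (Finsupp.linearEquivFunOnFinite R R _).symm.toLinearMap ∘ₗ f ∘ₗ e.symm.toLinearMap,
    ?_⟩
  simpa using hf.comp e.symm.injective

theorem exists_injective_finsupp_of_selfInjective (hR : Module.Injective R R)
    (M : Type u) [AddCommGroup M] [Module R M] :
    ∃ (ι : Type u) (f : M →ₗ[R] (ι →₀ R)), Injective f :=
  exists_injective_finsupp_of_forall_span_singleton (fun _ => .finsupp _)
    (exists_injective_span_singleton_to_finsupp hR)

end SelfInjective

namespace ModComplex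

variable {R : Type u} [CommRing R] (L : ModComplex R)

theorem homAcyclic_of_injective (hL : L.Acyclic) (Q : Type u) [AddCommGroup Q] [Module R Q]
    [Module.Injective R Q] : L.HomAcyclic Q := by
  intro i φ
  refine ⟨fun hφ => ?_, ?_⟩
  · refine Module.Injective.exists_comp_eq_of_ker_le (L.d i) φ ?_
    rw [(hL i).linearMap_ker_eq]
    rintro _ ⟨z, rfl⟩
    exact LinearMap.congr_fun hφ z
  · rintro ⟨ψ, rfl⟩
    show ψ ∘ₗ L.d i ∘ₗ L.d (i + 1) = 0
    rw [L.dd, LinearMap.comp_zero]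

theorem coHomAcyclic_of_projective (hL : L.Acyclic) (P : Type u) [AddCommGroup P]
    [Module R P] [Module.Projective R P] : L.CoHomAcyclic P := by
  intro i φ
  refine ⟨fun hφ => ?_, ?_⟩
  · have hrange : ∀ x, φ x ∈ LinearMap.range (L.d (i + 1)) := fun x =>
      (hL i).linearMap_ker_eq ▸ LinearMap.congr_fun hφ x
    obtain ⟨ψ, hψ⟩ := Module.projective_lifting_property (L.d (i + 1)).rangeRestrict
      (φ.codRestrict _ hrange) (L.d (i + 1)).surjective_rangeRestrict
    exact ⟨ψ, LinearMap.ext fun x => congr_arg Subtype.val (LinearMap.congr_fun hψ x)⟩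
  · rintro ⟨ψ, rfl⟩
    show (L.d i ∘ₗ L.d (i + 1)) ∘ₗ ψ = 0
    rw [L.dd, LinearMap.zero_comp]

end ModComplex

structure ShortExactChain (R : Type u) [CommRing R] where
  Z : ℤ → ModuleCat.{u} R
  X : ℤ → ModuleCat.{u} R
  ι : ∀ i, Z (i + 1) →ₗ[R] X i
  π : ∀ i, X i →ₗ[R] Z i
  ι_injective : ∀ i, Injective (ι i)
  π_surjective : ∀ i, Surjective (π i)
  exact : ∀ i, Function.Exact (ι i) (π i)

namespace ShortExactChain

variable {R : Type u} [CommRing R] (S : ShortExactChain R)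

abbrev toModComplex : ModComplex R where
  X i := S.X i
  d i := S.ι i ∘ₗ S.π (i + 1)
  dd i := LinearMap.ext fun x => by simp [(S.exact (i + 1)).apply_apply_eq_zero]

theorem acyclic : S.toModComplex.Acyclic := fun i =>
  (S.π_surjective (i + 1 + 1)).comp_exact_iff_exact.2
    ((S.ι_injective i).comp_exact_iff_exact.2 (S.exact (i + 1)))

theorem isCokerOf : IsCokerOf S.toModComplex (S.Z 0) :=
  ⟨S.π 0, S.π_surjective 0, by
    rw [(S.exact 0).linearMap_ker_eq]
    exact (LinearMap.range_comp_of_range_eq_top _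
      (LinearMap.range_eq_top.2 (S.π_surjective 1))).symm⟩

theorem isKerOf : IsKerOf S.toModComplex (S.Z 2) :=
  ⟨S.ι 1, S.ι_injective 1, by
    rw [← (S.exact 1).linearMap_ker_eq]
    exact (LinearMap.ker_comp_of_ker_eq_bot _ (LinearMap.ker_eq_bot.2 (S.ι_injective 0))).symm⟩

def shift : ShortExactChain R where
  Z i := S.Z (i + 1)
  X i := S.X (i + 1)
  ι i := S.ι (i + 1)
  π i := S.π (i + 1)
  ι_injective i := S.ι_injective (i + 1)
  π_surjective i := S.π_surjective (i + 1)
  exact i := S.exact (i + 1)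

end ShortExactChain

noncomputable section CompleteResolution

variable {R : Type u} [CommRing R]
  (hemb : ∀ (N : Type u) [AddCommGroup N] [Module R N],
    ∃ (ι : Type u) (f : N →ₗ[R] (ι →₀ R)), Injective f)

def freeEmbeddingIndex (N : ModuleCat.{u} R) : Type u := (hemb N).choose

def freeEmbedding (N : ModuleCat.{u} R) : N →ₗ[R] (freeEmbeddingIndex hemb N →₀ R) :=
  (hemb N).choose_spec.choose

theorem freeEmbedding_injective (N : ModuleCat.{u} R) : Injective (freeEmbedding hemb N) :=
  (hemb N).choose_spec.choose_spec

def cosyzygy (N : ModuleCat.{u} R) : ModuleCat.{u} R :=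
  .of R ((freeEmbeddingIndex hemb N →₀ R) ⧸ LinearMap.range (freeEmbedding hemb N))

def syzygy (N : ModuleCat.{u} R) : ModuleCat.{u} R :=
  .of R (LinearMap.ker (Finsupp.linearCombination R (id : N → N)))

def cosyzygies (M : ModuleCat.{u} R) : ℕ → ModuleCat.{u} R
  | 0 => M
  | n + 1 => cosyzygy hemb (cosyzygies M n)

def syzygies (M : ModuleCat.{u} R) : ℕ → ModuleCat.{u} R
  | 0 => M
  | n + 1 => syzygy (syzygies M n)

-- `M` sits at `Z 2`, where it is the kernel of `d 0`; in `shift (shift _)` it sits at `Z 0`,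
-- where it is the cokernel of `d 0`.
def completeResolution (M : ModuleCat.{u} R) : ShortExactChain R where
  Z
    | .ofNat 0 => cosyzygies hemb M 2
    | .ofNat 1 => cosyzygies hemb M 1
    | .ofNat (n + 2) => syzygies M n
    | .negSucc n => cosyzygies hemb M (n + 3)
  X
    | .ofNat 0 => .of R (freeEmbeddingIndex hemb (cosyzygies hemb M 1) →₀ R)
    | .ofNat 1 => .of R (freeEmbeddingIndex hemb M →₀ R)
    | .ofNat (n + 2) => .of R (syzygies M n →₀ R)
    | .negSucc n => .of R (freeEmbeddingIndex hemb (cosyzygies hemb M (n + 2)) →₀ R)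
  ι
    | .ofNat 0 => freeEmbedding hemb _
    | .ofNat 1 => freeEmbedding hemb M
    | .ofNat (_ + 2) => (LinearMap.ker _).subtype
    | .negSucc 0 => freeEmbedding hemb _
    | .negSucc (_ + 1) => freeEmbedding hemb _
  π
    | .ofNat 0 => (LinearMap.range _).mkQ
    | .ofNat 1 => (LinearMap.range _).mkQ
    | .ofNat (_ + 2) => Finsupp.linearCombination R id
    | .negSucc _ => (LinearMap.range _).mkQ
  ι_injective
    | .ofNat 0 | .ofNat 1 | .negSucc 0 | .negSucc (_ + 1) => freeEmbedding_injective hemb _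
    | .ofNat (_ + 2) => Subtype.val_injective
  π_surjective
    | .ofNat 0 | .ofNat 1 | .negSucc _ => Submodule.mkQ_surjective _
    | .ofNat (_ + 2) => Finsupp.linearCombination_id_surjective R _
  exact
    | .ofNat 0 | .ofNat 1 | .negSucc 0 | .negSucc (_ + 1) => LinearMap.exact_map_mkQ_range _
    | .ofNat (_ + 2) => LinearMap.exact_subtype_ker_map _

theorem completeResolution_projective (M : ModuleCat.{u} R) (i : ℤ) :
    Module.Projective R ((completeResolution hemb M).X i) := by
  rcases i with (_ | _ | _) | _ <;> exact inferInstanceAs (Module.Projective R (_ →₀ R))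

theorem completeResolution_injective (hfree : ∀ ι : Type u, Module.Injective R (ι →₀ R))
    (M : ModuleCat.{u} R) (i : ℤ) : Module.Injective R ((completeResolution hemb M).X i) := by
  rcases i with (_ | _ | _) | _ <;> exact hfree _

end CompleteResolution

/-- Over a quasi-Frobenius ring (Noetherian and self-injective), every module
is Gorenstein projective and Gorenstein injective. -/
theorem gorensteinProjective_and_injective_of_quasiFrobenius
    {R : Type u} [CommRing R] [IsNoetherianRing R]
    (hR : Module.Injective R R)
    (M : Type u) [AddCommGroup M] [Module R M] :
    IsGorensteinProjective R M ∧ IsGorensteinInjective R M := by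
  have hfree : ∀ ι : Type u, Module.Injective R (ι →₀ R) := fun ι => .finsupp ι
  have hemb : ∀ (N : Type u) [AddCommGroup N] [Module R N],
      ∃ (ι : Type u) (f : N →ₗ[R] (ι →₀ R)), Injective f :=
    fun N _ _ => exists_injective_finsupp_of_selfInjective hR N
  let S := completeResolution hemb (.of R M)
  refine ⟨⟨S.shift.shift.toModComplex, S.shift.shift.acyclic,
      fun i => completeResolution_projective hemb _ (i + 1 + 1), fun Q _ _ _ => ?_,
      S.shift.shift.isCokerOf⟩,
    ⟨S.toModComplex, S.acyclic, completeResolution_injective hemb hfree _, fun E _ _ _ => ?_,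
      S.isKerOf⟩⟩
  · have := hfree Q
    have : Module.Injective R Q := .of_projective
    exact S.shift.shift.toModComplex.homAcyclic_of_injective S.shift.shift.acyclic Q
  · obtain ⟨ι, f, hf⟩ := hemb E
    have := Module.Injective.projective_of_embedding f hf
    exact S.toModComplex.coHomAcyclic_of_projective S.acyclic E
end

section
/- Let R be a commutative ring and 0 → M' → M → M'' → 0 an exact sequence of R-modules. If M' and M'' are Gorenstein projective, then M is Gorenstein projective. -/
universe u

open TensorProduct

/-!
A horseshoe argument for complete resolutions. Let `L₁ → M'` and `L₂ → M''` be acyclic complexes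
of projectives that stay acyclic under `Hom(-, Q)` for projective `Q`. The complex for `M` is
`L₁ ⊕ L₂` in each degree with differential `(a, b) ↦ (d a + θ b, d b)`, for maps
`θᵢ : L₂ᵢ₊₁ → L₁ᵢ` with `d θ + θ d = 0`. Such a complex inherits acyclicity, and acyclicity of `Hom(-, Q)`, from `L₁` and `L₂`. The maps
`θᵢ` are built degree by degree from `θ₀`: upwards by lifting along `d` of the acyclic `L₁`
(projectivity of `L₂`), downwards by extending along `d` of `L₂` (acyclicity of
`Hom(L₂, L₁ᵢ)`, which holds because `L₁ᵢ` is projective). `θ₀` comes from lifting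
`L₂₀ → M''` to `M` and correcting the defect on the boundaries through `M'`.
-/

namespace Int

variable {T : ℤ → Type*} (C : ∀ i, T (i + 1) → T i → Prop)

noncomputable def chainUp (up : ∀ i t' t, C i t' t → ∃ t'', C (i + 1) t'' t')
    (t₁ : T 1) (t₀ : T 0) (h : C 0 t₁ t₀) :
    (n : ℕ) → {p : T ((n : ℤ) + 1) × T n // C n p.1 p.2}
  | 0 => ⟨(t₁, t₀), h⟩
  | n + 1 =>
    let p := chainUp up t₁ t₀ h n
    ⟨((up _ _ _ p.2).choose, p.1.1), (up _ _ _ p.2).choose_spec⟩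

-- Indexed by `negSucc n` rather than `-n`, so that consecutive indices agree definitionally.
noncomputable def chainDown (down : ∀ i t'' t', C (i + 1) t'' t' → ∃ t, C i t' t)
    (t₁ : T 1) (t₀ : T 0) (h : C 0 t₁ t₀) :
    (n : ℕ) → {p : T (negSucc n + 1) × T (negSucc n) // C (negSucc n) p.1 p.2}
  | 0 => ⟨(t₀, (down _ _ _ h).choose), (down _ _ _ h).choose_spec⟩
  | n + 1 =>
    let p := chainDown down t₁ t₀ h n
    ⟨(p.1.2, (down _ _ _ p.2).choose), (down _ _ _ p.2).choose_spec⟩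

theorem exists_dependent_chain (up : ∀ i t' t, C i t' t → ∃ t'', C (i + 1) t'' t')
    (down : ∀ i t'' t', C (i + 1) t'' t' → ∃ t, C i t' t)
    (t₁ : T 1) (t₀ : T 0) (h : C 0 t₁ t₀) :
    ∃ θ : ∀ i, T i, θ 0 = t₀ ∧ ∀ i, C i (θ (i + 1)) (θ i) := by
  refine ⟨fun
    | ofNat n => (chainUp C up t₁ t₀ h n).1.2
    | negSucc n => (chainDown C down t₁ t₀ h n).1.2, rfl, ?_⟩
  rintro (n | _ | n)
  exacts [(chainUp C up t₁ t₀ h n).2, (chainDown C down t₁ t₀ h 0).2,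
    (chainDown C down t₁ t₀ h (n + 1)).2]

end Int

theorem LinearMap.exists_comp_eq_of_range_le {R P M N : Type*} [Semiring R]
    [AddCommMonoid P] [Module R P] [Module.Projective R P]
    [AddCommMonoid M] [Module R M] [AddCommMonoid N] [Module R N]
    (F : M →ₗ[R] N) (φ : P →ₗ[R] N) (h : range φ ≤ range F) :
    ∃ t : P →ₗ[R] M, F ∘ₗ t = φ := by
  obtain ⟨t, ht⟩ := Module.projective_lifting_property F.rangeRestrict
    (φ.codRestrict (range F) fun x => h (mem_range_self φ x)) F.surjective_rangeRestrict
  exact ⟨t, ext fun x => congrArg Subtype.val (LinearMap.congr_fun ht x)⟩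

namespace ModComplex

variable {R : Type u} [CommRing R] {L₁ L₂ : ModComplex R}

/-- The mapping cone of `θ`, viewed as a chain map to `L₁` from `L₂` shifted down by one with
negated differential. -/
def cone (θ : ∀ i, L₂.X (i + 1) →ₗ[R] L₁.X i)
    (hθ : ∀ i, L₁.d i ∘ₗ θ (i + 1) + θ i ∘ₗ L₂.d (i + 1) = 0) : ModComplex R where
  X i := L₁.X i × L₂.X i
  d i := ((L₁.d i).coprod (θ i)).prod (L₂.d i ∘ₗ LinearMap.snd R _ _)
  dd i := by
    ext x
    · simpa using LinearMap.congr_fun (L₁.dd i) x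
    · simp
    · simpa using LinearMap.congr_fun (hθ i) x
    · simpa using LinearMap.congr_fun (L₂.dd i) x

variable {θ : ∀ i, L₂.X (i + 1) →ₗ[R] L₁.X i}
  (hθ : ∀ i, L₁.d i ∘ₗ θ (i + 1) + θ i ∘ₗ L₂.d (i + 1) = 0)

@[simp]
theorem cone_d_apply (i : ℤ) (a : L₁.X (i + 1)) (b : L₂.X (i + 1)) :
    (cone θ hθ).d i (a, b) = (L₁.d i a + θ i b, L₂.d i b) :=
  rfl

theorem cone_acyclic (h₁ : L₁.Acyclic) (h₂ : L₂.Acyclic) : (cone θ hθ).Acyclic := by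
  intro i y
  constructor
  · obtain ⟨a, b⟩ := y
    intro h
    obtain ⟨ha, hb⟩ : L₁.d i a + θ i b = 0 ∧ L₂.d i b = 0 := Prod.ext_iff.1 h
    obtain ⟨b₁, rfl⟩ := (h₂ i b).1 hb
    have hθb₁ : L₁.d i (θ (i + 1) b₁) + θ i (L₂.d (i + 1) b₁) = 0 := by
      simpa using LinearMap.congr_fun (hθ i) b₁
    obtain ⟨a₁, ha₁⟩ := (h₁ i (a - θ (i + 1) b₁)).1 (by
      rw [map_sub, eq_neg_of_add_eq_zero_left ha, eq_neg_of_add_eq_zero_left hθb₁, sub_self])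
    exact ⟨(a₁, b₁), by rw [cone_d_apply, ha₁, sub_add_cancel]⟩
  · rintro ⟨x, rfl⟩
    exact LinearMap.congr_fun ((cone θ hθ).dd i) x

theorem cone_homAcyclic {Q : Type u} [AddCommGroup Q] [Module R Q]
    (h₁ : L₁.HomAcyclic Q) (h₂ : L₂.HomAcyclic Q) : (cone θ hθ).HomAcyclic Q := by
  intro i y
  constructor
  · intro hy
    set y₁ : L₁.X (i + 1) →ₗ[R] Q := y ∘ₗ LinearMap.inl R _ _
    set y₂ : L₂.X (i + 1) →ₗ[R] Q := y ∘ₗ LinearMap.inr R _ _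
    have hy_apply (a b) : y (a, b) = y₁ a + y₂ b :=
      (LinearMap.congr_fun (LinearMap.coprod_comp_inl_inr (M := L₁.X (i + 1)) y) (a, b)).symm
    have hy_d (a b) : y₁ (L₁.d (i + 1) a + θ (i + 1) b) + y₂ (L₂.d (i + 1) b) = 0 := by
      rw [← hy_apply, ← cone_d_apply hθ]
      exact LinearMap.congr_fun hy (a, b)
    obtain ⟨ψ₁, hψ₁⟩ := (h₁ i y₁).1 (LinearMap.ext fun a => by simpa using hy_d a 0)
    obtain ⟨ψ₂, hψ₂⟩ := (h₂ i (y₂ - ψ₁ ∘ₗ θ i)).1 <| LinearMap.ext fun b => by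
      have hθb : L₁.d i (θ (i + 1) b) + θ i (L₂.d (i + 1) b) = 0 := by
        simpa using LinearMap.congr_fun (hθ i) b
      have hyb : ψ₁ (L₁.d i (θ (i + 1) b)) + y₂ (L₂.d (i + 1) b) = 0 := by
        simpa [← hψ₁] using hy_d 0 b
      simp only [LinearMap.comp_apply, LinearMap.sub_apply, LinearMap.zero_apply]
      rw [eq_neg_of_add_eq_zero_right hθb, map_neg, sub_neg_eq_add, add_comm, hyb]
    refine ⟨ψ₁.coprod ψ₂, LinearMap.ext fun x => ?_⟩
    obtain ⟨a, b⟩ := x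
    have ha : ψ₁ (L₁.d i a) = y₁ a := LinearMap.congr_fun hψ₁ a
    have hb : ψ₂ (L₂.d i b) = y₂ b - ψ₁ (θ i b) := LinearMap.congr_fun hψ₂ b
    change ψ₁ (L₁.d i a + θ i b) + ψ₂ (L₂.d i b) = y (a, b)
    rw [map_add, ha, hb, hy_apply]
    abel
  · rintro ⟨x, rfl⟩
    change (x ∘ₗ _) ∘ₗ _ = 0
    rw [LinearMap.comp_assoc, (cone θ hθ).dd, LinearMap.comp_zero]

theorem cone_projective (h₁ : ∀ i, Module.Projective R (L₁.X i))
    (h₂ : ∀ i, Module.Projective R (L₂.X i)) (i : ℤ) : Module.Projective R ((cone θ hθ).X i) :=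
  have := h₁ i
  have := h₂ i
  inferInstanceAs (Module.Projective R (L₁.X i × L₂.X i))

theorem isCokerOf_cone {M' M M'' : Type u} [AddCommGroup M'] [Module R M'] [AddCommGroup M]
    [Module R M] [AddCommGroup M''] [Module R M''] {f : M' →ₗ[R] M} {g : M →ₗ[R] M''}
    (hf : Function.Injective f) (hfg : LinearMap.range f = LinearMap.ker g)
    {p₁ : L₁.X 0 →ₗ[R] M'} (hp₁ : Function.Surjective p₁)
    (hker₁ : LinearMap.ker p₁ = LinearMap.range (L₁.d 0))
    {p₂ : L₂.X 0 →ₗ[R] M''} (hp₂ : Function.Surjective p₂)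
    (hker₂ : LinearMap.ker p₂ = LinearMap.range (L₂.d 0))
    {β : L₂.X 0 →ₗ[R] M} (hβ : g ∘ₗ β = p₂) (hθ₀ : f ∘ₗ p₁ ∘ₗ θ 0 = -(β ∘ₗ L₂.d 0)) :
    IsCokerOf (cone θ hθ) M := by
  have hgf (x : M') : g (f x) = 0 := LinearMap.mem_ker.1 (hfg ▸ LinearMap.mem_range_self f x)
  have hgβ (b : L₂.X 0) : g (β b) = p₂ b := LinearMap.congr_fun hβ b
  have hfθ₀ (b : L₂.X (0 + 1)) : f (p₁ (θ 0 b)) = -β (L₂.d 0 b) := LinearMap.congr_fun hθ₀ b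
  refine ⟨(f ∘ₗ p₁).coprod β, fun m => ?_, le_antisymm ?_ ?_⟩
  · obtain ⟨b, hb⟩ := hp₂ (g m)
    obtain ⟨m₀, hm₀⟩ : m - β b ∈ LinearMap.range f := by
      rw [hfg, LinearMap.mem_ker, map_sub, hgβ, hb, sub_self]
    obtain ⟨a, rfl⟩ := hp₁ m₀
    exact ⟨(a, b), by change f (p₁ a) + β b = m; rw [hm₀, sub_add_cancel]⟩
  · rintro ⟨a, b⟩ (hab : f (p₁ a) + β b = 0)
    have hb : b ∈ LinearMap.ker p₂ := by simpa [hgf, hgβ] using congrArg g hab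
    rw [hker₂] at hb
    obtain ⟨b₁, rfl⟩ := hb
    have ha : a - θ 0 b₁ ∈ LinearMap.ker p₁ := hf <| by
      rw [map_sub, map_sub, hfθ₀, eq_neg_of_add_eq_zero_left hab, sub_self, map_zero]
    rw [hker₁] at ha
    obtain ⟨a₁, ha₁⟩ := ha
    exact ⟨(a₁, b₁), by rw [cone_d_apply, ha₁, sub_add_cancel]⟩
  · rintro _ ⟨⟨a, b⟩, rfl⟩
    have hp₁d : p₁ (L₁.d 0 a) = 0 := LinearMap.mem_ker.1 (hker₁ ▸ LinearMap.mem_range_self _ a)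
    change f (p₁ (L₁.d 0 a + θ 0 b)) + β (L₂.d 0 b) = 0
    rw [map_add, hp₁d, zero_add, hfθ₀, neg_add_cancel]

theorem exists_twisting (hac₁ : L₁.Acyclic) (hproj₂ : ∀ i, Module.Projective R (L₂.X i))
    (hhom₂ : ∀ i, L₂.HomAcyclic (L₁.X i)) (θ₀ : L₂.X (0 + 1) →ₗ[R] L₁.X 0)
    (hθ₀ : LinearMap.range (θ₀ ∘ₗ L₂.d 1) ≤ LinearMap.range (L₁.d 0)) :
    ∃ θ : ∀ i, L₂.X (i + 1) →ₗ[R] L₁.X i,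
      θ 0 = θ₀ ∧ ∀ i, L₁.d i ∘ₗ θ (i + 1) + θ i ∘ₗ L₂.d (i + 1) = 0 := by
  have lift (i : ℤ) (φ : L₂.X (i + 1 + 1) →ₗ[R] L₁.X i)
      (hφ : LinearMap.range φ ≤ LinearMap.range (L₁.d i)) :
      ∃ t, L₁.d i ∘ₗ t + φ = 0 := by
    have := hproj₂ (i + 1 + 1)
    obtain ⟨t, ht⟩ := (L₁.d i).exists_comp_eq_of_range_le (-φ) (by rwa [LinearMap.range_neg])
    exact ⟨t, by rw [ht, neg_add_cancel]⟩
  obtain ⟨θ₁, hθ₁⟩ := lift 0 _ hθ₀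
  refine Int.exists_dependent_chain (fun i t' t => L₁.d i ∘ₗ t' + t ∘ₗ L₂.d (i + 1) = 0)
    (fun i t' t h => lift (i + 1) _ ?_) (fun i t'' t' h => ?_) θ₁ θ₀ hθ₁
  · rw [← LinearMap.exact_iff.mp (hac₁ i), LinearMap.range_le_ker_iff, ← LinearMap.comp_assoc,
      eq_neg_of_add_eq_zero_left h, LinearMap.neg_comp, LinearMap.comp_assoc, L₂.dd,
      LinearMap.comp_zero, neg_zero]
  · obtain ⟨t, ht⟩ := (hhom₂ i (i + 1) (-(L₁.d i ∘ₗ t'))).1 <| by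
      change (-(L₁.d i ∘ₗ t')) ∘ₗ L₂.d (i + 1 + 1) = 0
      rw [LinearMap.neg_comp, LinearMap.comp_assoc, eq_neg_of_add_eq_zero_right h,
        LinearMap.comp_neg, ← LinearMap.comp_assoc, L₁.dd, LinearMap.zero_comp, neg_zero, neg_zero]
    exact ⟨t, by rw [show t ∘ₗ L₂.d (i + 1) = _ from ht, add_neg_cancel]⟩

end ModComplex

/-- The class of Gorenstein projective modules is closed under extensions:
if `0 → M' → M → M'' → 0` is exact with `M'` and `M''` Gorenstein projective,
then so is `M`. -/
theorem gorensteinProjective_of_extension {R : Type u} [CommRing R]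
    {M' M M'' : Type u}
    [AddCommGroup M'] [Module R M'] [AddCommGroup M] [Module R M]
    [AddCommGroup M''] [Module R M'']
    (f : M' →ₗ[R] M) (g : M →ₗ[R] M'')
    (hf : Function.Injective f) (hg : Function.Surjective g)
    (hfg : LinearMap.range f = LinearMap.ker g)
    (h' : IsGorensteinProjective R M') (h'' : IsGorensteinProjective R M'') :
    IsGorensteinProjective R M := by
  obtain ⟨L₁, hac₁, hproj₁, hhom₁, p₁, hp₁, hker₁⟩ := h'
  obtain ⟨L₂, hac₂, hproj₂, hhom₂, p₂, hp₂, hker₂⟩ := h''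
  have := hproj₂ 0
  have := hproj₂ (0 + 1)
  obtain ⟨β, hβ⟩ := g.exists_comp_eq_of_range_le p₂ (by simp [LinearMap.range_eq_top.2 hg])
  obtain ⟨γ, hγ⟩ := f.exists_comp_eq_of_range_le (-(β ∘ₗ L₂.d 0)) <| by
    rintro _ ⟨b, rfl⟩
    rw [hfg, LinearMap.mem_ker]
    have hp₂d : p₂ (L₂.d 0 b) = 0 := LinearMap.mem_ker.1 (hker₂ ▸ LinearMap.mem_range_self _ b)
    simp [← LinearMap.comp_apply g β, hβ, hp₂d]
  obtain ⟨θ₀, rfl⟩ := p₁.exists_comp_eq_of_range_le γ (by simp [LinearMap.range_eq_top.2 hp₁])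
  have hθ₀ : LinearMap.range (θ₀ ∘ₗ L₂.d 1) ≤ LinearMap.range (L₁.d 0) := by
    rintro _ ⟨b, rfl⟩
    rw [← hker₁, LinearMap.mem_ker]
    apply hf
    have hdd : L₂.d 0 (L₂.d 1 b) = 0 := LinearMap.congr_fun (L₂.dd 0) b
    have hfθ₀ : f (p₁ (θ₀ (L₂.d 1 b))) = -β (L₂.d 0 (L₂.d 1 b)) := LinearMap.congr_fun hγ _
    rw [LinearMap.comp_apply, hfθ₀, hdd, map_zero, neg_zero, map_zero]
  obtain ⟨θ, rfl, hθ⟩ :=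
    ModComplex.exists_twisting hac₁ hproj₂ (fun i => hhom₂ _ (hproj₁ i)) θ₀ hθ₀
  exact ⟨ModComplex.cone θ hθ, ModComplex.cone_acyclic hθ hac₁ hac₂,
    ModComplex.cone_projective hθ hproj₁ hproj₂,
    fun Q _ _ hQ => ModComplex.cone_homAcyclic hθ (hhom₁ Q hQ) (hhom₂ Q hQ),
    ModComplex.isCokerOf_cone hθ hf hfg hp₁ hker₁ hp₂ hker₂ hβ hγ⟩
end
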